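/- arXiv:1104.2244 — 8 statements merged into one kernel-verified Lean document; each statement's English description precedes it below -/
import Mathlib

section
/- Let G and H be finite groups and L ≤ G×H. Assume that either (i) 𝒜 ⊆ G is a transversal (set of coset representatives) for G/k₁(L) and ℬ ⊆ H is a transversal for H/p₂(L), or (ii) 𝒜 ⊆ G is a transversal for G/p₁(L) and ℬ ⊆ H is a transversal for H/k₂(L). Then 𝒜×ℬ ⊆ G×H is a transversal for (G×H)/L. -/
/-- A transversal (set of representatives) for the left cosets of `K` in `G`:
each left coset `gK` contains exactly one element of `A`. -/
def IsLeftTransversal {G : Type*} [Group G] (A : Set G) (K : Subgroup G) : Prop :=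
  ∀ g : G, ∃! a, a ∈ A ∧ g⁻¹ * a ∈ K

/-- For finite groups `G`, `H` and `L ≤ G × H`, if either
(i) `𝒜` is a transversal for `G/k₁(L)` and `ℬ` is a transversal for `H/p₂(L)`, or
(ii) `𝒜` is a transversal for `G/p₁(L)` and `ℬ` is a transversal for `H/k₂(L)`,
then `𝒜 × ℬ` is a transversal for `(G × H)/L`. -/
theorem stmt1 {G H : Type*} [Group G] [Group H] [Finite G] [Finite H]
    (L : Subgroup (G × H)) (A : Set G) (B : Set H)
    (h : (IsLeftTransversal A (L.comap (MonoidHom.inl G H)) ∧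
            IsLeftTransversal B (L.map (MonoidHom.snd G H))) ∨
         (IsLeftTransversal A (L.map (MonoidHom.fst G H)) ∧
            IsLeftTransversal B (L.comap (MonoidHom.inr G H)))) :
    IsLeftTransversal (A ×ˢ B) L := by
  obtain ⟨hA, hB⟩ | ⟨hA, hB⟩ := h
  · rintro ⟨g, h'⟩
    obtain ⟨b, ⟨hbB, hbP⟩, hbu⟩ := hB h'
    rw [Subgroup.mem_map] at hbP
    obtain ⟨⟨x, y⟩, hxyL, hy⟩ := hbP
    simp only [MonoidHom.coe_snd] at hy
    subst hy
    obtain ⟨a, ⟨haA, haK⟩, hau⟩ := hA (g * x)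
    rw [Subgroup.mem_comap] at haK
    refine ⟨(a, b), ⟨⟨haA, hbB⟩, ?_⟩, ?_⟩
    · have := mul_mem hxyL haK
      have heq : ((x, h'⁻¹ * b) : G × H) * MonoidHom.inl G H ((g * x)⁻¹ * a)
          = (g, h')⁻¹ * (a, b) := by
        simp only [MonoidHom.inl_apply, Prod.mk_mul_mk, Prod.inv_mk, Prod.mk.injEq]
        constructor <;> group
      rwa [heq] at this
    · rintro ⟨a', b'⟩ ⟨⟨ha'A, hb'B⟩, hmem⟩
      have hb' : b' = b := by
        apply hbu
        refine ⟨hb'B, Subgroup.mem_map.mpr ⟨(g, h')⁻¹ * (a', b'), hmem, rfl⟩⟩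
      subst hb'
      have ha' : a' = a := by
        apply hau
        refine ⟨ha'A, Subgroup.mem_comap.mpr ?_⟩
        have := mul_mem (inv_mem hxyL) hmem
        have heq : ((x, h'⁻¹ * b') : G × H)⁻¹ * ((g, h')⁻¹ * (a', b'))
            = MonoidHom.inl G H ((g * x)⁻¹ * a') := by
          simp only [MonoidHom.inl_apply, Prod.inv_mk, Prod.mk_mul_mk, Prod.mk.injEq]
          constructor <;> group
        rwa [heq] at this
      simp [ha']
  · rintro ⟨g, h'⟩
    obtain ⟨a, ⟨haA, haP⟩, hau⟩ := hA g
    rw [Subgroup.mem_map] at haP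
    obtain ⟨⟨x, y⟩, hxyL, hx⟩ := haP
    simp only [MonoidHom.coe_fst] at hx
    subst hx
    obtain ⟨b, ⟨hbB, hbK⟩, hbu⟩ := hB (h' * y)
    rw [Subgroup.mem_comap] at hbK
    refine ⟨(a, b), ⟨⟨haA, hbB⟩, ?_⟩, ?_⟩
    · have := mul_mem hxyL hbK
      have heq : ((g⁻¹ * a, y) : G × H) * MonoidHom.inr G H ((h' * y)⁻¹ * b)
          = (g, h')⁻¹ * (a, b) := by
        simp only [MonoidHom.inr_apply, Prod.mk_mul_mk, Prod.inv_mk, Prod.mk.injEq]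
        constructor <;> group
      rwa [heq] at this
    · rintro ⟨a', b'⟩ ⟨⟨ha'A, hb'B⟩, hmem⟩
      have ha' : a' = a := by
        apply hau
        refine ⟨ha'A, Subgroup.mem_map.mpr ⟨(g, h')⁻¹ * (a', b'), hmem, rfl⟩⟩
      subst ha'
      have hb' : b' = b := by
        apply hbu
        refine ⟨hb'B, Subgroup.mem_comap.mpr ?_⟩
        have := mul_mem (inv_mem hxyL) hmem
        have heq : ((g⁻¹ * a', y) : G × H)⁻¹ * ((g, h')⁻¹ * (a', b'))
            = MonoidHom.inr G H ((h' * y)⁻¹ * b') := by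
          simp only [MonoidHom.inr_apply, Prod.inv_mk, Prod.mk_mul_mk, Prod.mk.injEq]
          constructor <;> group
        rwa [heq] at this
      simp [hb']
end

section
/- Let G and H be finite groups and L ≤ G×H. Then k₁(N_{G×H}(L)) = C_G(k₁(L), p₁(L)) and k₂(N_{G×H}(L)) = C_H(k₂(L), p₂(L)). In particular, if U ≤ G, V ≤ H and α: V → U is a surjective homomorphism, then k₁(N_{G×H}(⊲(U,α,V))) = C_G(U) and k₂(N_{G×H}(⊲(U,α,V))) = C_H(ker(α), V); in particular C_H(V) is a normal subgroup of k₂(N_{G×H}(⊲(U,α,V))). -/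
/-!
Conjugating by `(g, 1)` only moves first coordinates:
`(g, 1) * (x, y) * (g, 1)⁻¹ = (g * x * g⁻¹ * x⁻¹, 1) * (x, y)`. Hence, once `g` normalizes `p₁(L)`,
`(g, 1)` normalizes `L` exactly when the commutators `[g, x]`, `x ∈ p₁(L)`, lie in `k₁(L)`; the
second coordinate follows by swapping the factors. For the graph `⊲(U, α, V)` of `α` one has
`k₁ = 1`, `p₁ = U`, `k₂ = ker α` and `p₂ = V`, and every element centralizing `p₂(L)`
centralizes `L`.
-/

namespace Subgroup

variable {G H : Type*} [Group G] [Group H]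

theorem inl_mem_normalizer_iff (L : Subgroup (G × H)) (g : G) :
    (g, (1 : H)) ∈ normalizer (L : Set (G × H)) ↔
      g ∈ normalizer (L.comap (MonoidHom.inl G H) : Set G) ∧
      g ∈ normalizer (L.map (MonoidHom.fst G H) : Set G) ∧
      ∀ b ∈ L.map (MonoidHom.fst G H), g * b * g⁻¹ * b⁻¹ ∈ L.comap (MonoidHom.inl G H) := by
  have conj_eq (x : G) (y : H) :
      (g, (1 : H)) * (x, y) * (g, (1 : H))⁻¹ = (g * x * g⁻¹ * x⁻¹, (1 : H)) * (x, y) := by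
    simp
  constructor
  · intro hg
    refine ⟨le_normalizer_comap _ hg, le_normalizer_map _ ⟨_, hg, rfl⟩, ?_⟩
    rintro - ⟨⟨x, y⟩, hxy, rfl⟩
    exact (L.mul_mem_cancel_right hxy).mp (conj_eq x y ▸ (hg _).mp hxy)
  · rintro ⟨-, hfst, hcomm⟩
    refine mem_normalizer_iff.mpr fun ⟨x, y⟩ => ?_
    rw [conj_eq]
    by_cases hx : x ∈ L.map (MonoidHom.fst G H)
    · exact (L.mul_mem_cancel_left (hcomm x hx)).symm
    · refine iff_of_false (fun hxy => hx ⟨_, hxy, rfl⟩) fun hconj => hx ?_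
      exact (mem_normalizer_iff.mp hfst x).mpr ⟨_, hconj, by simp⟩

theorem inr_mem_normalizer_iff (L : Subgroup (G × H)) (h : H) :
    ((1 : G), h) ∈ normalizer (L : Set (G × H)) ↔
      h ∈ normalizer (L.comap (MonoidHom.inr G H) : Set H) ∧
      h ∈ normalizer (L.map (MonoidHom.snd G H) : Set H) ∧
      ∀ b ∈ L.map (MonoidHom.snd G H), h * b * h⁻¹ * b⁻¹ ∈ L.comap (MonoidHom.inr G H) := by
  set e : G × H ≃* H × G := MulEquiv.prodComm
  have hnorm : ((1 : G), h) ∈ normalizer (L : Set (G × H)) ↔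
      (h, (1 : G)) ∈ normalizer (L.map e.toMonoidHom : Set (H × G)) := by
    rw [← map_equiv_normalizer_eq, mem_map_equiv]; rfl
  have hcomap : (L.map e.toMonoidHom).comap (MonoidHom.inl H G) = L.comap (MonoidHom.inr G H) := by
    ext; simp [e]
  have hmap : (L.map e.toMonoidHom).map (MonoidHom.fst H G) = L.map (MonoidHom.snd G H) := by
    rw [map_map]; rfl
  rw [hnorm, inl_mem_normalizer_iff, hcomap, hmap]

theorem comap_inl_normalizer_eq_centralizer {L : Subgroup (G × H)}
    (hL : L.comap (MonoidHom.inl G H) = ⊥) :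
    (normalizer (L : Set (G × H))).comap (MonoidHom.inl G H) =
      centralizer (L.map (MonoidHom.fst G H) : Set G) := by
  ext g
  rw [mem_comap, MonoidHom.inl_apply, inl_mem_normalizer_iff, hL, normalizer_eq_top,
    mem_centralizer_iff_commutator_eq_one']
  simp only [mem_top, mem_bot, true_and, commutatorElement_def]
  exact ⟨And.right, fun h =>
    ⟨centralizer_le_normalizer _ (mem_centralizer_iff_commutator_eq_one'.mpr h), h⟩⟩

theorem centralizer_map_snd_le_comap_inr_normalizer (L : Subgroup (G × H)) :
    centralizer (L.map (MonoidHom.snd G H) : Set H) ≤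
      (normalizer (L : Set (G × H))).comap (MonoidHom.inr G H) := by
  intro h hh
  refine centralizer_le_normalizer (L : Set (G × H)) fun ⟨x, y⟩ hxy => ?_
  simp [mem_centralizer_iff.mp hh y ⟨_, hxy, rfl⟩]

theorem comap_inr_normalizer_le_normalizer_map_snd (L : Subgroup (G × H)) :
    (normalizer (L : Set (G × H))).comap (MonoidHom.inr G H) ≤
      normalizer (L.map (MonoidHom.snd G H) : Set H) :=
  fun _ hh => le_normalizer_map _ ⟨_, hh, rfl⟩

theorem normal_centralizer_map_snd_subgroupOf_comap_inr_normalizer (L : Subgroup (G × H)) :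
    ((centralizer (L.map (MonoidHom.snd G H) : Set H)).subgroupOf
      ((normalizer (L : Set (G × H))).comap (MonoidHom.inr G H))).Normal :=
  (normal_subgroupOf_iff_le_normalizer (centralizer_map_snd_le_comap_inr_normalizer L)).mpr
    ((comap_inr_normalizer_le_normalizer_map_snd L).trans
      (le_normalizer_of_normal_subgroupOf (centralizer_le_normalizer _)))

end Subgroup

namespace MonoidHom

variable {K G H : Type*} [Group K] [Group G] [Group H] (f : K →* G) (g : K →* H)

theorem range_prod_comap_inl : (f.prod g).range.comap (inl G H) = g.ker.map f := by
  ext x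
  simp [Prod.ext_iff, and_comm]

theorem range_prod_comap_inr : (f.prod g).range.comap (inr G H) = f.ker.map g := by
  ext y
  simp [Prod.ext_iff]

theorem range_prod_map_fst : (f.prod g).range.map (fst G H) = f.range := by
  rw [map_range, fst_comp_prod]

theorem range_prod_map_snd : (f.prod g).range.map (snd G H) = g.range := by
  rw [map_range, snd_comp_prod]

end MonoidHom

theorem stmt2_general {G H : Type*} [Group G] [Group H]
    (L : Subgroup (G × H)) (U : Subgroup G) (V : Subgroup H)
    (α : ↥V →* G) (hα : α.range = U) :
    -- general statement, i = 1
    (((Subgroup.normalizer (L : Set (G × H))).comap (MonoidHom.inl G H) : Set G) =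
      {g : G | g ∈ Subgroup.normalizer (L.comap (MonoidHom.inl G H) : Set G) ∧
        g ∈ Subgroup.normalizer (L.map (MonoidHom.fst G H) : Set G) ∧
        ∀ b ∈ L.map (MonoidHom.fst G H),
          g * b * g⁻¹ * b⁻¹ ∈ L.comap (MonoidHom.inl G H)}) ∧
    -- general statement, i = 2
    (((Subgroup.normalizer (L : Set (G × H))).comap (MonoidHom.inr G H) : Set H) =
      {h : H | h ∈ Subgroup.normalizer (L.comap (MonoidHom.inr G H) : Set H) ∧
        h ∈ Subgroup.normalizer (L.map (MonoidHom.snd G H) : Set H) ∧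
        ∀ b ∈ L.map (MonoidHom.snd G H),
          h * b * h⁻¹ * b⁻¹ ∈ L.comap (MonoidHom.inr G H)}) ∧
    -- particular case: k₁(N(⊲(U,α,V))) = C_G(U)
    ((Subgroup.normalizer ((α.prod V.subtype).range : Set (G × H))).comap (MonoidHom.inl G H) =
      Subgroup.centralizer (U : Set G)) ∧
    -- particular case: k₂(N(⊲(U,α,V))) = C_H(ker α, V)
    (((Subgroup.normalizer ((α.prod V.subtype).range : Set (G × H))).comap (MonoidHom.inr G H) : Set H) =
      {h : H | h ∈ Subgroup.normalizer (α.ker.map V.subtype : Set H) ∧ h ∈ Subgroup.normalizer (V : Set H) ∧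
        ∀ v ∈ V, h * v * h⁻¹ * v⁻¹ ∈ α.ker.map V.subtype}) ∧
    -- C_H(V) ⊴ k₂(N(⊲(U,α,V)))
    (Subgroup.centralizer (V : Set H) ≤
        (Subgroup.normalizer ((α.prod V.subtype).range : Set (G × H))).comap (MonoidHom.inr G H) ∧
      ((Subgroup.centralizer (V : Set H)).subgroupOf
        ((Subgroup.normalizer ((α.prod V.subtype).range : Set (G × H))).comap (MonoidHom.inr G H))).Normal) := by
  have hinl : (α.prod V.subtype).range.comap (MonoidHom.inl G H) = ⊥ := by
    rw [MonoidHom.range_prod_comap_inl, Subgroup.ker_subtype, Subgroup.map_bot]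
  have hsnd : (α.prod V.subtype).range.map (MonoidHom.snd G H) = V := by
    rw [MonoidHom.range_prod_map_snd, Subgroup.range_subtype]
  refine ⟨Set.ext (Subgroup.inl_mem_normalizer_iff L), Set.ext (Subgroup.inr_mem_normalizer_iff L),
    ?_, ?_, ?_, ?_⟩
  · rw [Subgroup.comap_inl_normalizer_eq_centralizer hinl, MonoidHom.range_prod_map_fst, hα]
  · ext h
    rw [SetLike.mem_coe, Subgroup.mem_comap, MonoidHom.inr_apply, Subgroup.inr_mem_normalizer_iff,
      MonoidHom.range_prod_comap_inr, hsnd, Set.mem_ofPred_eq]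
  · simpa only [hsnd] using
      Subgroup.centralizer_map_snd_le_comap_inr_normalizer (α.prod V.subtype).range
  · simpa only [hsnd] using
      Subgroup.normal_centralizer_map_snd_subgroupOf_comap_inr_normalizer (α.prod V.subtype).range

/-- Let `L ≤ G × H`.  Then
`k₁(N_{G×H}(L)) = C_G(k₁(L), p₁(L))` and `k₂(N_{G×H}(L)) = C_H(k₂(L), p₂(L))`,
where for `A ⊴ B ≤ G`, `C_G(A,B)` is the set of elements of
`N_G(A) ∩ N_G(B)` inducing the identity on `B/A`.
In particular, for `U ≤ G`, `V ≤ H` and a surjective homomorphism `α : V → U`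
(with graph `⊲(U,α,V) = {(α v, v) : v ∈ V}`):
`k₁(N(⊲(U,α,V))) = C_G(U)`, `k₂(N(⊲(U,α,V))) = C_H(ker α, V)`, and
`C_H(V)` is a normal subgroup of `k₂(N(⊲(U,α,V)))`. -/
theorem stmt2 {G H : Type*} [Group G] [Group H] [Finite G] [Finite H]
    (L : Subgroup (G × H)) (U : Subgroup G) (V : Subgroup H)
    (α : ↥V →* G) (hα : α.range = U) :
    -- general statement, i = 1
    (((Subgroup.normalizer (L : Set (G × H))).comap (MonoidHom.inl G H) : Set G) =
      {g : G | g ∈ Subgroup.normalizer (L.comap (MonoidHom.inl G H) : Set G) ∧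
        g ∈ Subgroup.normalizer (L.map (MonoidHom.fst G H) : Set G) ∧
        ∀ b ∈ L.map (MonoidHom.fst G H),
          g * b * g⁻¹ * b⁻¹ ∈ L.comap (MonoidHom.inl G H)}) ∧
    -- general statement, i = 2
    (((Subgroup.normalizer (L : Set (G × H))).comap (MonoidHom.inr G H) : Set H) =
      {h : H | h ∈ Subgroup.normalizer (L.comap (MonoidHom.inr G H) : Set H) ∧
        h ∈ Subgroup.normalizer (L.map (MonoidHom.snd G H) : Set H) ∧
        ∀ b ∈ L.map (MonoidHom.snd G H),
          h * b * h⁻¹ * b⁻¹ ∈ L.comap (MonoidHom.inr G H)}) ∧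
    -- particular case: k₁(N(⊲(U,α,V))) = C_G(U)
    ((Subgroup.normalizer ((α.prod V.subtype).range : Set (G × H))).comap (MonoidHom.inl G H) =
      Subgroup.centralizer (U : Set G)) ∧
    -- particular case: k₂(N(⊲(U,α,V))) = C_H(ker α, V)
    (((Subgroup.normalizer ((α.prod V.subtype).range : Set (G × H))).comap (MonoidHom.inr G H) : Set H) =
      {h : H | h ∈ Subgroup.normalizer (α.ker.map V.subtype : Set H) ∧ h ∈ Subgroup.normalizer (V : Set H) ∧
        ∀ v ∈ V, h * v * h⁻¹ * v⁻¹ ∈ α.ker.map V.subtype}) ∧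
    -- C_H(V) ⊴ k₂(N(⊲(U,α,V)))
    (Subgroup.centralizer (V : Set H) ≤
        (Subgroup.normalizer ((α.prod V.subtype).range : Set (G × H))).comap (MonoidHom.inr G H) ∧
      ((Subgroup.centralizer (V : Set H)).subgroupOf
        ((Subgroup.normalizer ((α.prod V.subtype).range : Set (G × H))).comap (MonoidHom.inr G H))).Normal) :=
  stmt2_general L U V α hα
end

section
/- Let G, H, K be finite groups, let X be a left-free (G,H)-biset and Y a left-free (H,K)-biset. Let U ≤ G, W ≤ K and let γ: W → U be a surjective group homomorphism. Then |(X ×_H Y)^{⊲(U,γ,W)}| = (1/|H|) · Σ_{V ≤ H} Σ_{(α,β) ∈ E(U,V)×E(V,W), α∘β = γ} |X^{⊲(U,α,V)}| · |Y^{⊲(V,β,W)}|, where the outer sum runs over all subgroups V of H. -/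
/-!
The action `h • (x, y) = (x h⁻¹, h y)` of `H` on `X × Y` is free because `Y` is left-free, so a
class of `X ×_H Y` fixed by `⊲(U,γ,W)` has exactly `|H|` representatives: the pairs `(x, y)` such
that every `w ∈ W` admits some `h ∈ H` with `(γ w, h)` fixing `x` and `(h, w)` fixing `y`.
Left-freeness of `Y` makes `h = φ w` unique, so `φ : W → H` is a homomorphism; with `V = φ(W)` and
`β = φ : W ↠ V`, left-freeness of `X` shows `ker β ≤ ker γ`, so `γ = α ∘ β` for some `α : V → G`.
Hence these pairs form the disjoint union, over the factorizations `γ = α ∘ β` through subgroups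
`V ≤ H`, of the sets `X^{⊲(U,α,V)} × Y^{⊲(V,β,W)}`.
-/

open scoped Classical

/-- The `H`-orbit relation on `X × Y` whose quotient is the tensor product
`X ×_H Y` of a `(G,H)`-biset `X` and an `(H,K)`-biset `Y`
(`h • (x,y) = (x h⁻¹, h y)`, i.e. `((1,h) • x, (h,1) • y)`). -/
def tensSetoid (G H K X Y : Type*) [Group G] [Group H] [Group K]
    [MulAction (G × H) X] [MulAction (H × K) Y] : Setoid (X × Y) where
  r a b := ∃ h : H, ((((1 : G), h) : G × H) • a.1, ((h, (1 : K)) : H × K) • a.2) = b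
  iseqv := by
    constructor
    · intro a; exact ⟨1, Prod.ext (one_smul (G × H) _) (one_smul (H × K) _)⟩
    · rintro a b ⟨h, rfl⟩
      exact ⟨h⁻¹, by simp [smul_smul]; exact Prod.ext (one_smul (G × H) _) (one_smul (H × K) _)⟩
    · rintro a b c ⟨h, rfl⟩ ⟨h', rfl⟩
      exact ⟨h' * h, by simp [smul_smul]⟩

instance MonoidHom.finite {M N : Type*} [MulOneClass M] [MulOneClass N] [Finite M] [Finite N] :
    Finite (M →* N) :=
  .of_injective _ DFunLike.coe_injective

theorem card_subtype_eq_card_mul_card_of_free {H Z : Type*} [Group H] [MulAction H Z]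
    (hfree : ∀ z : Z, MulAction.stabilizer H z = ⊥) (P : Z → Prop)
    (hP : ∀ (h : H) (z : Z), P z → P (h • z)) :
    Nat.card {z // P z} =
      Nat.card {q : Quotient (MulAction.orbitRel H Z) // ∀ z, Quotient.mk _ z = q → P z} *
        Nat.card H := by
  have hPq : ∀ z, P z ↔ ∀ z', Quotient.mk (MulAction.orbitRel H Z) z' = Quotient.mk _ z → P z' := by
    refine fun z => ⟨fun hz z' hz' => ?_, fun h => h z rfl⟩
    obtain ⟨h, rfl⟩ := MulAction.orbitRel_apply.mp (Quotient.exact hz')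
    exact hP h z hz
  rw [← Nat.card_prod, Nat.card_congr ((MulAction.selfEquivOrbitsQuotientProd hfree).subtypeEquiv
    (q := fun p => ∀ z, Quotient.mk _ z = p.1 → P z) hPq)]
  exact Nat.card_congr (Equiv.prodSubtypeFstEquivSubtypeProd (β := H)
    (p := fun q : Quotient (MulAction.orbitRel H Z) => ∀ z, Quotient.mk _ z = q → P z))

theorem Nat.card_exists_eq_finsum {ι Z : Type*} [Finite ι] [Finite Z] (Q : ι → Z → Prop)
    (huniq : ∀ i j z, Q i z → Q j z → i = j) :
    Nat.card {z // ∃ i, Q i z} = ∑ᶠ i, Nat.card {z // Q i z} := by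
  have := Fintype.ofFinite ι
  rw [finsum_eq_sum_of_fintype, ← Nat.card_sigma]
  refine (Nat.card_congr (Equiv.ofBijective (fun s => ⟨s.2.1, s.1, s.2.2⟩) ⟨?_, ?_⟩)).symm
  · rintro ⟨i, z, hz⟩ ⟨j, z', hz'⟩ h
    obtain rfl : z = z' := congrArg Subtype.val h
    obtain rfl := huniq i j z hz hz'
    rfl
  · rintro ⟨z, i, hz⟩
    exact ⟨⟨i, z, hz⟩, rfl⟩

theorem finsum_sigma_prod {ι M : Type*} {A B : ι → Type*} [AddCommMonoid M] [Finite ι]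
    [∀ i, Finite (A i)] [∀ i, Finite (B i)] (f : (Σ i, A i × B i) → M) :
    ∑ᶠ t, f t = ∑ᶠ (i) (a) (b), f ⟨i, a, b⟩ := by
  have := Fintype.ofFinite ι
  have := fun i => Fintype.ofFinite (A i)
  have := fun i => Fintype.ofFinite (B i)
  simp only [finsum_eq_sum_of_fintype]
  rw [← Finset.univ_sigma_univ, Finset.sum_sigma]
  exact Finset.sum_congr rfl fun i _ => Fintype.sum_prod_type _

section Factorization

variable {G H W : Type*} [Group G] [Group H] [Group W]

theorem MonoidHom.range_eq_of_comp_eq {V : Type*} [Group V] {α : V →* G} {β : W →* V}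
    {γ : W →* G} (hβ : Function.Surjective β) (h : α.comp β = γ) : α.range = γ.range := by
  rw [← h, MonoidHom.range_comp, β.range_eq_top_of_surjective hβ, ← MonoidHom.range_eq_map]

abbrev Factorization (H W G : Type*) [Group H] [Group W] [Group G] :=
  Σ V : Subgroup H, (V →* G) × (W →* V)

def Factorization.IsOf (t : Factorization H W G) (γ : W →* G) : Prop :=
  Function.Surjective t.2.2 ∧ t.2.1.comp t.2.2 = γ

theorem Factorization.ext_of_isOf {γ : W →* G} {t t' : Factorization H W G}
    (ht : t.IsOf γ) (ht' : t'.IsOf γ) (h : ∀ w, (t.2.2 w : H) = t'.2.2 w) : t = t' := by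
  obtain ⟨V, α, β⟩ := t
  obtain ⟨V', α', β'⟩ := t'
  have hrange : ∀ (V : Subgroup H) (β : W →* V), Function.Surjective β →
      (V.subtype.comp β).range = V := fun V β hβ => by
    rw [MonoidHom.range_comp, β.range_eq_top_of_surjective hβ, ← MonoidHom.range_eq_map,
      Subgroup.range_subtype]
  obtain rfl : V = V' := by
    rw [← hrange V β ht.1, ← hrange V' β' ht'.1]
    exact congrArg MonoidHom.range (MonoidHom.ext h)
  obtain rfl : β = β' := MonoidHom.ext fun w => Subtype.ext (h w)
  obtain rfl : α = α' := (MonoidHom.cancel_right ht.1).mp (ht.2.trans ht'.2.symm)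
  rfl

end Factorization

def LeftFree (A B X : Type*) [Group A] [Group B] [MulAction (A × B) X] : Prop :=
  ∀ (x : X) (a : A), ((a, (1 : B)) : A × B) • x = x → a = 1

theorem LeftFree.fst_eq {A B X : Type*} [Group A] [Group B] [MulAction (A × B) X]
    (hX : LeftFree A B X) {x : X} {a a' : A} {b : B} (h : ((a, b) : A × B) • x = x)
    (h' : ((a', b) : A × B) • x = x) : a = a' := by
  refine mul_inv_eq_one.mp (hX x _ ?_)
  conv_lhs => rw [← h']
  rw [smul_smul, Prod.mk_mul_mk, inv_mul_cancel_right, one_mul, h]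

section Tensor

variable (G H K X Y : Type*) [Group G] [Group H] [Group K]
  [MulAction (G × H) X] [MulAction (H × K) Y]

abbrev balancingAction : MulAction H (X × Y) :=
  letI := MulAction.compHom X (MonoidHom.inr G H)
  letI := MulAction.compHom Y (MonoidHom.inl H K)
  Prod.mulAction

theorem tensSetoid_eq_orbitRel :
    tensSetoid G H K X Y = @MulAction.orbitRel H (X × Y) _ (balancingAction G H K X Y) :=
  Setoid.ext fun _ _ =>
    ⟨(tensSetoid G H K X Y).iseqv.symm, (tensSetoid G H K X Y).iseqv.symm⟩

variable {G H K X Y}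

theorem mk_smul_eq_mk_iff (g : G) (k : K) (x : X) (y : Y) :
    Quotient.mk (tensSetoid G H K X Y) (((g, (1 : H)) : G × H) • x, (((1 : H), k) : H × K) • y)
        = Quotient.mk _ (x, y) ↔
      ∃ h : H, ((g, h) : G × H) • x = x ∧ ((h, k) : H × K) • y = y := by
  simp only [Quotient.eq, tensSetoid, smul_smul, Prod.mk_mul_mk, one_mul, mul_one, Prod.mk.injEq]

variable (H) {W : Subgroup K}

/-- The pairs whose class in `X ×_H Y` is fixed by `⊲(γ(W), γ, W)` (`mk_smul_eq_mk_iff`). -/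
def IsFixedModulo (γ : W →* G) (z : X × Y) : Prop :=
  ∀ w : W, ∃ h : H, ((γ w, h) : G × H) • z.1 = z.1 ∧ ((h, (w : K)) : H × K) • z.2 = z.2

variable {H}

theorem IsFixedModulo.balance {γ : W →* G} {z : X × Y} (hz : IsFixedModulo H γ z) (h : H) :
    IsFixedModulo H γ ((((1 : G), h) : G × H) • z.1, ((h, (1 : K)) : H × K) • z.2) := by
  intro w
  obtain ⟨h', hx, hy⟩ := hz w
  refine ⟨h * h' * h⁻¹, ?_, ?_⟩
  · conv_rhs => rw [← hx]
    simp only [smul_smul, Prod.mk_mul_mk, mul_one, one_mul, inv_mul_cancel_right]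
  · conv_rhs => rw [← hy]
    simp only [smul_smul, Prod.mk_mul_mk, mul_one, one_mul, inv_mul_cancel_right]

theorem card_isFixedModulo_eq (hY : LeftFree H K Y) (γ : W →* G) :
    Nat.card {z : X × Y // IsFixedModulo H γ z} =
      Nat.card {q : Quotient (tensSetoid G H K X Y) |
        ∀ (w : ↥W) (x : X) (y : Y), Quotient.mk (tensSetoid G H K X Y) (x, y) = q →
          Quotient.mk (tensSetoid G H K X Y)
            (((γ w, (1 : H)) : G × H) • x, (((1 : H), (w : K)) : H × K) • y) = q}
      * Nat.card H := by
  have hfix : ∀ q : Quotient (tensSetoid G H K X Y),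
      (∀ z, Quotient.mk _ z = q → IsFixedModulo H γ z) ↔
      ∀ (w : ↥W) (x : X) (y : Y), Quotient.mk (tensSetoid G H K X Y) (x, y) = q →
          Quotient.mk (tensSetoid G H K X Y)
            (((γ w, (1 : H)) : G × H) • x, (((1 : H), (w : K)) : H × K) • y) = q := by
    refine fun q => ⟨fun hq w x y hxy => ?_, fun hq z hz w => ?_⟩
    · subst hxy
      exact (mk_smul_eq_mk_iff _ _ x y).mpr (hq _ rfl w)
    · subst hz
      exact (mk_smul_eq_mk_iff _ _ z.1 z.2).mp (hq w z.1 z.2 rfl)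
  rw [Set.coe_ofPred, ← Nat.card_congr (Equiv.subtypeEquivRight hfix), tensSetoid_eq_orbitRel]
  let := balancingAction G H K X Y
  refine card_subtype_eq_card_mul_card_of_free (fun z => ?_) _ fun h z hz => hz.balance h
  exact (Subgroup.eq_bot_iff_forall _).mpr fun h hh => hY z.2 h (congrArg Prod.snd hh)

end Tensor

section Decomposition

variable {G H K X Y : Type*} [Group G] [Group H] [Group K]
  [MulAction (G × H) X] [MulAction (H × K) Y] {W : Subgroup K}

/-- `x ∈ X^{⊲(U,α,V)}` and `y ∈ Y^{⊲(V,β,W)}` for `t = ⟨V, α, β⟩` and `z = (x, y)`. -/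
def Factorization.Fixes (t : Factorization H W G) (z : X × Y) : Prop :=
  (∀ v : t.1, ((t.2.1 v, (v : H)) : G × H) • z.1 = z.1) ∧
    ∀ w : W, (((t.2.2 w : H), (w : K)) : H × K) • z.2 = z.2

theorem Factorization.isFixedModulo {γ : W →* G} {t : Factorization H W G} {z : X × Y}
    (ht : t.IsOf γ) (hz : t.Fixes z) : IsFixedModulo H γ z := by
  refine fun w => ⟨t.2.2 w, ?_, hz.2 w⟩
  rw [← ht.2, MonoidHom.comp_apply]
  exact hz.1 _

theorem Factorization.eq_of_fixes (hY : LeftFree H K Y) {γ : W →* G} {t t' : Factorization H W G}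
    {z : X × Y} (ht : t.IsOf γ) (ht' : t'.IsOf γ) (hz : t.Fixes z) (hz' : t'.Fixes z) :
    t = t' :=
  ext_of_isOf ht ht' fun w => hY.fst_eq (hz.2 w) (hz'.2 w)

theorem IsFixedModulo.exists_factorization (hX : LeftFree G H X) (hY : LeftFree H K Y)
    {γ : W →* G} {z : X × Y} (hz : IsFixedModulo H γ z) :
    ∃ t : Factorization H W G, t.IsOf γ ∧ t.Fixes z := by
  choose φ hφ using hz
  let φ' : W →* H := MonoidHom.mk' φ fun w w' => hY.fst_eq (hφ (w * w')).2 <| by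
    rw [show ((φ w * φ w', ((w * w' : W) : K)) : H × K) = (φ w, (w : K)) * (φ w', (w' : K)) from
      rfl, mul_smul, (hφ w').2, (hφ w).2]
  have hker : φ'.rangeRestrict.ker ≤ γ.ker := fun w hw => by
    rw [MonoidHom.ker_rangeRestrict, MonoidHom.mem_ker] at hw
    have hx := (hφ w).1
    rw [show φ w = 1 from hw] at hx
    exact hX z.1 (γ w) hx
  let α := φ'.rangeRestrict.liftOfSurjective φ'.rangeRestrict_surjective ⟨γ, hker⟩
  have hαβ : α.comp φ'.rangeRestrict = γ := MonoidHom.liftOfRightInverse_comp _ _ _ _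
  refine ⟨⟨φ'.range, α, φ'.rangeRestrict⟩, ⟨φ'.rangeRestrict_surjective, hαβ⟩, ?_,
    fun w => (hφ w).2⟩
  rintro ⟨_, w, rfl⟩
  show ((α (φ'.rangeRestrict w), φ w) : G × H) • z.1 = z.1
  rw [← MonoidHom.comp_apply, hαβ]
  exact (hφ w).1

theorem card_isOf_and_fixes (γ : W →* G) (V : Subgroup H) (α : V →* G) (β : W →* V) :
    Nat.card {z : X × Y // Factorization.IsOf (H := H) ⟨V, α, β⟩ γ ∧
        Factorization.Fixes (H := H) ⟨V, α, β⟩ z} =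
      if α.range = γ.range ∧ Function.Surjective β ∧ α.comp β = γ then
        Nat.card {x : X | ∀ v : V, ((α v, (v : H)) : G × H) • x = x} *
          Nat.card {y : Y | ∀ w : W, (((β w : V) : H), (w : K)) • y = y}
      else 0 := by
  by_cases ht : Factorization.IsOf (H := H) ⟨V, α, β⟩ γ
  · rw [if_pos ⟨MonoidHom.range_eq_of_comp_eq ht.1 ht.2, ht⟩, ← Nat.card_prod]
    exact Nat.card_congr ((Equiv.subtypeEquivRight fun _ => and_iff_right ht).trans
      (Equiv.subtypeProdEquivProd (p := fun x : X => ∀ v : V, ((α v, (v : H)) : G × H) • x = x)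
        (q := fun y : Y => ∀ w : W, (((β w : V) : H), (w : K)) • y = y)))
  · rw [if_neg fun h => ht h.2]
    have : IsEmpty {z : X × Y // Factorization.IsOf (H := H) ⟨V, α, β⟩ γ ∧
        Factorization.Fixes (H := H) ⟨V, α, β⟩ z} := ⟨fun z => ht z.2.1⟩
    exact Nat.card_of_isEmpty

theorem card_isFixedModulo_eq_finsum [Finite G] [Finite H] [Finite K] [Finite X] [Finite Y]
    (hX : LeftFree G H X) (hY : LeftFree H K Y) (γ : W →* G) :
    Nat.card {z : X × Y // IsFixedModulo H γ z} =
      ∑ᶠ (V : Subgroup H) (α : V →* G) (β : W →* V),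
        if α.range = γ.range ∧ Function.Surjective β ∧ α.comp β = γ then
          Nat.card {x : X | ∀ v : V, ((α v, (v : H)) : G × H) • x = x} *
            Nat.card {y : Y | ∀ w : W, (((β w : V) : H), (w : K)) • y = y}
        else 0 := by
  have hiff : ∀ z : X × Y,
      IsFixedModulo H γ z ↔ ∃ t : Factorization H W G, t.IsOf γ ∧ t.Fixes z :=
    fun z => ⟨fun hz => hz.exists_factorization hX hY,
      fun ⟨_, ht, hz⟩ => Factorization.isFixedModulo ht hz⟩
  rw [Nat.card_congr (Equiv.subtypeEquivRight hiff), Nat.card_exists_eq_finsum _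
    fun _ _ _ h h' => Factorization.eq_of_fixes hY h.1 h'.1 h.2 h'.2, finsum_sigma_prod]
  exact finsum_congr fun V => finsum_congr fun α => finsum_congr fun β =>
    card_isOf_and_fixes γ V α β

end Decomposition

/-- for left-free bisets `X` (a `(G,H)`-biset) and `Y` (an
`(H,K)`-biset), subgroups `U ≤ G`, `W ≤ K` and a surjective homomorphism
`γ : W → U` (encoded as `γ : ↥W →* G` with `γ.range = U`):
`|(X ×_H Y)^{⊲(U,γ,W)}| = (1/|H|) · Σ_{V ≤ H} Σ_{(α,β) ∈ E(U,V)×E(V,W), α∘β=γ}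
|X^{⊲(U,α,V)}|·|Y^{⊲(V,β,W)}|`.  Here `X ×_H Y` is the quotient of `X × Y` by
`tensSetoid`, on which `(g,k)` acts by `[x,y] ↦ [(g,1)•x, (1,k)•y]`, and
`E(U,V)` is encoded by homomorphisms `α : ↥V →* G` with `α.range = U`
(resp. surjective homomorphisms `β : ↥W →* ↥V`). -/
theorem stmt4 {G H K : Type*} [Group G] [Group H] [Group K]
    [Finite G] [Finite H] [Finite K]
    (X Y : Type*) [Finite X] [Finite Y] [MulAction (G × H) X] [MulAction (H × K) Y]
    (hX : ∀ (x : X) (g : G), ((g, (1 : H)) : G × H) • x = x → g = 1)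
    (hY : ∀ (y : Y) (h : H), ((h, (1 : K)) : H × K) • y = y → h = 1)
    (U : Subgroup G) (W : Subgroup K) (γ : ↥W →* G) (hγ : γ.range = U) :
    (Nat.card {q : Quotient (tensSetoid G H K X Y) |
        ∀ (w : ↥W) (x : X) (y : Y), Quotient.mk (tensSetoid G H K X Y) (x, y) = q →
          Quotient.mk (tensSetoid G H K X Y)
            (((γ w, (1 : H)) : G × H) • x, (((1 : H), (w : K)) : H × K) • y) = q} : ℚ)
    = (1 / (Nat.card H : ℚ)) *
      ∑ᶠ (V : Subgroup H), ∑ᶠ (α : ↥V →* G), ∑ᶠ (β : ↥W →* ↥V),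
        (if α.range = U ∧ Function.Surjective β ∧ α.comp β = γ then
          (Nat.card {x : X | ∀ v : ↥V, ((α v, (v : H)) : G × H) • x = x} : ℚ) *
          (Nat.card {y : Y | ∀ w : ↥W, (((β w : ↥V) : H), (w : K)) • y = y} : ℚ)
        else 0) := by
  subst hγ
  have hcount := (card_isFixedModulo_eq (X := X) hY γ).symm.trans
    (card_isFixedModulo_eq_finsum hX hY γ)
  have hH : (Nat.card H : ℚ) ≠ 0 := Nat.cast_ne_zero.mpr Nat.card_pos.ne'
  rw [one_div, eq_inv_mul_iff_mul_eq₀ hH, mul_comm]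
  exact_mod_cast hcount
end

section
/- Let G, H, K be finite groups, let (U,α,V) ∈ E_{G,H} and (V',β,W) ∈ E_{H,K}. (a) If V and V' are not H-conjugate then [U,α,V]⁺_{G×H} ·_H [V',β,W]⁺_{H×K} = 0 in ℚA(G,K). (b) If V = V' then [U,α,V]⁺_{G×H} ·_H [V,β,W]⁺_{H×K} = Σ_{(g,h,k) ∈ 𝒜×ℬ×𝒞} ⁽ᵍ'ᵏ⁾(U, α∘c_h⁻¹∘β, W), where 𝒜 ⊆ G is a transversal for G/p₁(N_{G×H}(⊲(U,α,V))), ℬ ⊆ N_H(V) is a transversal for N_H(V)/C_H(ker(α),V), and 𝒞 ⊆ K is a transversal for K/p₂(N_{H×K}(⊲(V,β,W))); moreover the right-hand side is independent of the choice of 𝒜, ℬ, 𝒞, and it is an element of A(G,K) fixed by the G×K-action. -/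
open scoped Classical

/-- The set `E_{G,H}` of triples `(U,α,V)` with `V ≤ H`, `U ≤ G` and
`α : V → U` a surjective homomorphism, encoded as pairs of a subgroup `V ≤ H`
and a homomorphism `α : ↥V →* G` (so that `U = α.range`). -/
abbrev TriE (G H : Type*) [Group G] [Group H] := (V : Subgroup H) × (↥V →* G)

/-- The graph subgroup `⊲(U,α,V) = {(α v, v) : v ∈ V} ≤ G × H` of a triple.
Triples are `G × H`-conjugate iff their graphs are conjugate. -/
def lhdOf {G H : Type*} [Group G] [Group H] (t : TriE G H) : Subgroup (G × H) :=
  (t.2.prod t.1.subtype).range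

/-- The ghost-algebra product `ℚA(G,H) × ℚA(H,K) → ℚA(G,K)`, given on basis
elements by `(U,α,V)·(V',β,W) = 0` if `V ≠ V'` and by
`(|C_H(V)|/|H|)·(U,α∘β,W)` if `V = V'`; elements of `ℚA` are represented by
their coefficient functions on the basis `TriE`. -/
noncomputable def ghostMul {G H K : Type*} [Group G] [Group H] [Group K]
    (a : TriE G H → ℚ) (b : TriE H K → ℚ) : TriE G K → ℚ :=
  fun r => ∑ᶠ (s : TriE G H), ∑ᶠ (t : TriE H K),
    if h : t.2.range = s.1 then
      (if r = ⟨t.1, s.2.comp (t.2.codRestrict s.1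
            (fun w => h ▸ MonoidHom.mem_range.mpr ⟨w, rfl⟩))⟩ then
        ((Nat.card ↥(Subgroup.centralizer ((s.1 : Subgroup H) : Set H)) : ℚ) /
          (Nat.card H : ℚ)) * a s * b t
      else 0)
    else 0

/-- The orbit sum `[U,α,V]⁺` (sum of the `G × H`-conjugates of the basis
element `(U,α,V)`), as a coefficient function: the indicator function of the
conjugation orbit of the triple `t`, detected via graphs. -/
noncomputable def orbSum {G H : Type*} [Group G] [Group H] (t : TriE G H) :
    TriE G H → ℚ :=
  fun s => if ∃ a : G × H,
    Subgroup.map (MulAut.conj a).toMonoidHom (lhdOf t) = lhdOf s then 1 else 0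

/-- Composition of relations: `L * M = {(g,k) | ∃ h, (g,h) ∈ L ∧ (h,k) ∈ M}`. -/
def starSub {G H K : Type*} [Group G] [Group H] [Group K]
    (L : Subgroup (G × H)) (M : Subgroup (H × K)) : Subgroup (G × K) where
  carrier := {x | ∃ h : H, (x.1, h) ∈ L ∧ (h, x.2) ∈ M}
  one_mem' := ⟨1, L.one_mem, M.one_mem⟩
  mul_mem' := by
    rintro a b ⟨h, hL, hM⟩ ⟨h', hL', hM'⟩
    exact ⟨h * h', mul_mem hL hL', mul_mem hM hM'⟩
  inv_mem' := by
    rintro a ⟨h, hL, hM⟩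
    exact ⟨h⁻¹, inv_mem hL, inv_mem hM⟩

/-- The right hand side of the product formula in Lemma 4.6(b): the sum over
`(g,h,k) ∈ 𝒜 × ℬ × 𝒞` of the basis elements `⁽ᵍ'ᵏ⁾(U, α∘c_{h⁻¹}∘β, W)`; the
triple `(U, α∘c_{h⁻¹}∘β, W)` is detected via its graph, which equals
`⊲(U,α,V) * ⁽⁽ʰ⁻¹'¹⁾⁾⊲(V,β,W)`. -/
noncomputable def rhs9 {G H K : Type*} [Group G] [Group H] [Group K]
    (s : TriE G H) (t : TriE H K)
    (A : Finset G) (B : Finset H) (C : Finset K) : TriE G K → ℚ :=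
  fun r => ∑ g ∈ A, ∑ h ∈ B, ∑ k ∈ C,
    if lhdOf r = Subgroup.map (MulAut.conj ((g, k) : G × K)).toMonoidHom
        (starSub (lhdOf s)
          (Subgroup.map (MulAut.conj ((h⁻¹, (1 : K)) : H × K)).toMonoidHom (lhdOf t)))
    then 1 else 0

/-- Admissibility of the triple of transversals `(𝒜, ℬ, 𝒞)`:
`𝒜 ⊆ G` is a transversal for `G/p₁(N_{G×H}(⊲(U,α,V)))`, `ℬ ⊆ N_H(V)` is a
transversal for `N_H(V)/C_H(ker α, V)`, and `𝒞 ⊆ K` is a transversal for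
`K/p₂(N_{H×K}(⊲(V,β,W)))`. -/
def isChoice {G H K : Type*} [Group G] [Group H] [Group K]
    (s : TriE G H) (t : TriE H K) (A : Finset G) (B : Finset H) (C : Finset K) : Prop :=
  (∀ g : G, ∃! x, x ∈ A ∧
    g⁻¹ * x ∈ Subgroup.map (MonoidHom.fst G H) (Subgroup.normalizer ((lhdOf s : Set (G × H))))) ∧
  (∀ b ∈ B, b ∈ Subgroup.normalizer (s.1 : Set H)) ∧
  (∀ n ∈ Subgroup.normalizer (s.1 : Set H), ∃! x, x ∈ B ∧ n⁻¹ * x ∈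
    {h : H | h ∈ Subgroup.normalizer ((s.2.ker.map s.1.subtype : Subgroup H) : Set H) ∧ h ∈ Subgroup.normalizer (s.1 : Set H) ∧
      ∀ v ∈ s.1, h * v * h⁻¹ * v⁻¹ ∈ s.2.ker.map s.1.subtype}) ∧
  (∀ k : K, ∃! x, x ∈ C ∧
    k⁻¹ * x ∈ Subgroup.map (MonoidHom.snd H K) (Subgroup.normalizer ((lhdOf t : Set (H × K)))))

/-!
Write `L = ⊲(U,α,V)` and `M = ⊲(V,β,W)`. The coefficient of a basis element `r` in
`[U,α,V]⁺ ·_H [V',β,W]⁺` is `|C_H(V)|/|H|` times the number of pairs `(L', M')` of conjugates of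
`L` and `M` with `p₂(L') = p₁(M')` whose composite relation `L' * M'` is the graph of `r`. There are
no such pairs unless `V` and `V'` are conjugate, which is (a). For (b), `H` acts on these pairs by
conjugating the middle factor without changing the composite. The pairs `(⁽ᵍ'¹⁾L, ⁽ʰ⁻¹'ᵏ⁾M)` with
`(g,h,k) ∈ 𝒜 × ℬ × 𝒞`, whose composites are the terms of the right-hand side, meet every orbit
exactly once, and their stabilisers are `C_H(V)`. Hence `|C_H(V)| · #pairs = |H| · #terms`, which is
the product formula. Independence of the transversals and `G × K`-invariance follow because the
number of pairs depends on neither.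
-/

open scoped Pointwise

namespace Subgroup

section Conj

variable {G : Type*} [Group G]

theorem map_conj_toMonoidHom (a : G) (L : Subgroup G) :
    L.map (MulAut.conj a).toMonoidHom = MulAut.conj a • L :=
  rfl

theorem mem_conj_smul_iff {a x : G} {L : Subgroup G} :
    x ∈ MulAut.conj a • L ↔ a⁻¹ * x * a ∈ L := by
  rw [mem_pointwise_smul_iff_inv_smul_mem, ← map_inv, MulAut.smul_def, MulAut.conj_apply, inv_inv]

theorem conj_smul_eq_self_iff {a : G} {L : Subgroup G} :
    MulAut.conj a • L = L ↔ a ∈ normalizer (L : Set G) :=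
  (mem_normalizer_iff_map_conj_eq (H := L)).symm

theorem conj_smul_eq_conj_smul_iff {a b : G} {L : Subgroup G} :
    MulAut.conj a • L = MulAut.conj b • L ↔ b⁻¹ * a ∈ normalizer (L : Set G) := by
  rw [← conj_smul_eq_self_iff, map_mul, mul_smul, map_inv, inv_smul_eq_iff]

theorem exists_conj_smul_eq_conj_smul_iff {L L' : Subgroup G} (g : G) :
    (∃ a : G, MulAut.conj a • L = MulAut.conj g • L') ↔ ∃ a : G, MulAut.conj a • L = L' := by
  constructor
  · rintro ⟨a, ha⟩
    exact ⟨g⁻¹ * a, by rw [map_mul, mul_smul, ha, map_inv, inv_smul_smul]⟩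
  · rintro ⟨a, rfl⟩
    exact ⟨g * a, by rw [map_mul, mul_smul]⟩

theorem conj_mem_centralizer_of_mem_normalizer {V : Subgroup G} {n z : G}
    (hn : n ∈ normalizer (V : Set G)) (hz : z ∈ centralizer (V : Set G)) :
    n * z * n⁻¹ ∈ centralizer (V : Set G) := by
  rw [mem_centralizer_iff] at hz ⊢
  intro v hv
  have hv' : n⁻¹ * v * n ∈ V := (mem_normalizer_iff''.mp hn v).mp hv
  calc v * (n * z * n⁻¹) = n * ((n⁻¹ * v * n) * z) * n⁻¹ := by group
    _ = n * (z * (n⁻¹ * v * n)) * n⁻¹ := by rw [hz _ hv']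
    _ = n * z * n⁻¹ * v := by group

theorem conj_smul_centralizer_le (a : G) (V : Subgroup G) :
    MulAut.conj a • centralizer (V : Set G) ≤
      centralizer ((MulAut.conj a • V : Subgroup G) : Set G) :=
  map_centralizer_le_centralizer_image _ _

theorem centralizer_conj_smul (a : G) (V : Subgroup G) :
    centralizer ((MulAut.conj a • V : Subgroup G) : Set G) =
      MulAut.conj a • centralizer (V : Set G) := by
  refine le_antisymm ?_ (conj_smul_centralizer_le a V)
  rw [subset_pointwise_smul_iff]
  simpa only [map_inv, inv_smul_smul] using conj_smul_centralizer_le a⁻¹ (MulAut.conj a • V)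

theorem card_centralizer_conj_smul (a : G) (V : Subgroup G) :
    Nat.card (centralizer ((MulAut.conj a • V : Subgroup G) : Set G)) =
      Nat.card (centralizer (V : Set G)) := by
  rw [centralizer_conj_smul]
  exact Nat.card_congr (equivSMul _ _).toEquiv.symm

end Conj

section Prod

variable {G H : Type*} [Group G] [Group H]

theorem map_fst_conj_smul (a : G × H) (L : Subgroup (G × H)) :
    (MulAut.conj a • L).map (MonoidHom.fst G H) = MulAut.conj a.1 • L.map (MonoidHom.fst G H) := by
  change map _ (map (MulAut.conj a).toMonoidHom L) = map (MulAut.conj _).toMonoidHom (map _ L)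
  rw [map_map, map_map]
  rfl

theorem map_snd_conj_smul (a : G × H) (L : Subgroup (G × H)) :
    (MulAut.conj a • L).map (MonoidHom.snd G H) = MulAut.conj a.2 • L.map (MonoidHom.snd G H) := by
  change map _ (map (MulAut.conj a).toMonoidHom L) = map (MulAut.conj _).toMonoidHom (map _ L)
  rw [map_map, map_map]
  rfl

theorem snd_mem_normalizer_map_snd {L : Subgroup (G × H)} {a : G × H}
    (ha : a ∈ normalizer (L : Set (G × H))) :
    a.2 ∈ normalizer (L.map (MonoidHom.snd G H) : Set H) := by
  rw [← conj_smul_eq_self_iff] at ha ⊢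
  rw [← map_snd_conj_smul, ha]

theorem mk_one_mem_centralizer {L : Subgroup (G × H)} {g : G}
    (hg : g ∈ centralizer (L.map (MonoidHom.fst G H) : Set G)) :
    (g, (1 : H)) ∈ centralizer (L : Set (G × H)) := by
  rw [mem_centralizer_iff] at hg ⊢
  intro x hx
  exact Prod.ext (hg x.1 ⟨x, hx, rfl⟩) (by simp)

theorem one_mk_mem_centralizer {L : Subgroup (G × H)} {h : H}
    (hh : h ∈ centralizer (L.map (MonoidHom.snd G H) : Set H)) :
    ((1 : G), h) ∈ centralizer (L : Set (G × H)) := by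
  rw [mem_centralizer_iff] at hh ⊢
  intro x hx
  exact Prod.ext (by simp) (hh x.2 ⟨x, hx, rfl⟩)

theorem one_mk_mem_normalizer_iff {L : Subgroup (G × H)} {h : H} :
    ((1 : G), h) ∈ normalizer (L : Set (G × H)) ↔
      h ∈ normalizer (L.comap (MonoidHom.inr G H) : Set H) ∧
      h ∈ normalizer (L.map (MonoidHom.snd G H) : Set H) ∧
      ∀ v ∈ L.map (MonoidHom.snd G H), h * v * h⁻¹ * v⁻¹ ∈ L.comap (MonoidHom.inr G H) := by
  have conj_eq (x : G × H) : ((1 : G), h) * x * ((1 : G), h)⁻¹ =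
      ((1 : G), h * x.2 * h⁻¹ * x.2⁻¹) * x := by
    ext <;> simp
  constructor
  · intro hN
    refine ⟨fun x => ?_, snd_mem_normalizer_map_snd hN, ?_⟩
    · simpa using mem_normalizer_iff.mp hN ((1 : G), x)
    · rintro - ⟨x, hx, rfl⟩
      have := mul_mem ((mem_normalizer_iff.mp hN x).mp hx) (inv_mem hx)
      rwa [conj_eq, mul_inv_cancel_right] at this
  · rintro ⟨-, hV, hcomm⟩
    have key {x : G × H} (hx : x.2 ∈ L.map (MonoidHom.snd G H)) :
        x ∈ L ↔ ((1 : G), h) * x * ((1 : G), h)⁻¹ ∈ L := by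
      rw [conj_eq]
      exact (mul_mem_cancel_left (mem_comap.mp (hcomm _ hx) : ((1 : G), _) ∈ L)).symm
    refine mem_normalizer_iff.mpr fun x => ⟨fun hx => (key ⟨x, hx, rfl⟩).mp hx, fun hx => ?_⟩
    refine (key ((mem_normalizer_iff.mp hV x.2).mpr ?_)).mpr hx
    exact ⟨_, hx, by simp⟩

end Prod

end Subgroup

theorem MulAction.card_mul_eq_of_existsUnique_mem_orbit {Γ X ι : Type*} [Group Γ]
    [MulAction Γ X] [Finite Γ] [Finite ι] {S : Set X} (f : ι → X) {c : ℕ}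
    (hS : ∀ (γ : Γ), ∀ x ∈ S, γ • x ∈ S) (hfS : ∀ i, f i ∈ S)
    (hf : ∀ x ∈ S, ∃! i, f i ∈ orbit Γ x) (hc : ∀ i, Nat.card (stabilizer Γ (f i)) = c) :
    Nat.card S * c = Nat.card ι * Nat.card Γ := by
  have := Fintype.ofFinite ι
  choose g hg hg' using hf
  let g' : S → ι := fun x => g x x.2
  let fiberEquiv (i : ι) : {x : S // g' x = i} ≃ orbit Γ (f i) :=
    { toFun x := ⟨x.1, (congrArg (fun j => x.1.1 ∈ orbit Γ (f j)) x.2).mp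
        (mem_orbit_symm.mp (hg _ _))⟩
      invFun y := ⟨⟨y, by obtain ⟨γ, hγ⟩ := y.2; rw [← hγ]; exact hS γ _ (hfS i)⟩,
        (hg' _ _ i (mem_orbit_symm.mp y.2)).symm⟩
      left_inv _ := rfl
      right_inv _ := rfl }
  have (i : ι) : Finite {x : S // g' x = i} :=
    have : Finite (orbit Γ (f i)) := Set.finite_range _
    Finite.of_equiv _ (fiberEquiv i).symm
  have horbit (i : ι) : Nat.card (orbit Γ (f i)) * c = Nat.card Γ := by
    rw [← hc, Nat.card_coe_set_eq, ← index_stabilizer, mul_comm, Subgroup.card_mul_index]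
  rw [← Nat.card_congr (Equiv.sigmaFiberEquiv g'), Nat.card_sigma, Finset.sum_mul]
  simp only [Nat.card_congr (fiberEquiv _), horbit, Finset.sum_const, Finset.card_univ,
    smul_eq_mul, Nat.card_eq_fintype_card]

section Graph

variable {G H K : Type*} [Group G] [Group H] [Group K]

open Subgroup

theorem mem_starSub {L : Subgroup (G × H)} {M : Subgroup (H × K)} {x : G × K} :
    x ∈ starSub L M ↔ ∃ h : H, (x.1, h) ∈ L ∧ (h, x.2) ∈ M :=
  Iff.rfl

theorem starSub_conj_smul (L : Subgroup (G × H)) (M : Subgroup (H × K)) (g : G) (h : H) (k : K) :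
    starSub (MulAut.conj (g, h) • L) (MulAut.conj (h, k) • M) =
      MulAut.conj (g, k) • starSub L M := by
  ext x
  simp only [mem_starSub, mem_conj_smul_iff]
  constructor
  · rintro ⟨y, hL, hM⟩
    exact ⟨h⁻¹ * y * h, hL, hM⟩
  · rintro ⟨y, hL, hM⟩
    refine ⟨h * y * h⁻¹, ?_, ?_⟩
    · simpa [mul_assoc] using hL
    · simpa [mul_assoc] using hM

theorem mem_lhdOf {s : TriE G H} {p : G} {q : H} :
    (p, q) ∈ lhdOf s ↔ ∃ hq : q ∈ s.1, s.2 ⟨q, hq⟩ = p := by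
  constructor
  · rintro ⟨v, hv⟩
    obtain ⟨rfl, rfl⟩ := Prod.mk.inj hv
    exact ⟨v.2, rfl⟩
  · rintro ⟨hq, rfl⟩
    exact ⟨⟨q, hq⟩, rfl⟩

theorem eq_of_mk_mem_lhdOf {s : TriE G H} {p p' : G} {q : H} (h : (p, q) ∈ lhdOf s)
    (h' : (p', q) ∈ lhdOf s) : p = p' := by
  obtain ⟨hq, rfl⟩ := mem_lhdOf.mp h
  obtain ⟨hq', rfl⟩ := mem_lhdOf.mp h'
  rfl

theorem map_snd_lhdOf (s : TriE G H) : (lhdOf s).map (MonoidHom.snd G H) = s.1 := by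
  rw [lhdOf, MonoidHom.map_range, MonoidHom.snd_comp_prod, range_subtype]

theorem map_fst_lhdOf (t : TriE H K) : (lhdOf t).map (MonoidHom.fst H K) = t.2.range := by
  rw [lhdOf, MonoidHom.map_range, MonoidHom.fst_comp_prod]

theorem comap_inr_lhdOf (s : TriE G H) :
    (lhdOf s).comap (MonoidHom.inr G H) = s.2.ker.map s.1.subtype := by
  ext v
  rw [mem_comap, MonoidHom.inr_apply, mem_lhdOf]
  constructor
  · rintro ⟨hv, hv'⟩
    exact ⟨⟨v, hv⟩, hv', rfl⟩
  · rintro ⟨w, hw, rfl⟩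
    exact ⟨w.2, hw⟩

theorem lhdOf_injective : Function.Injective (lhdOf : TriE G H → Subgroup (G × H)) := by
  rintro ⟨V, α⟩ ⟨V', α'⟩ h
  obtain rfl : V = V' := by
    simpa only [map_snd_lhdOf] using congrArg (map (MonoidHom.snd G H)) h
  obtain rfl : α = α' := by
    ext v
    have hv : ((α v : G), (v : H)) ∈ lhdOf ⟨V, α'⟩ := h ▸ mem_lhdOf.mpr ⟨v.2, rfl⟩
    exact (mem_lhdOf.mp hv).2.symm
  rfl

theorem exists_lhdOf_eq_conj_smul (a : G × H) (s : TriE G H) :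
    ∃ s' : TriE G H, lhdOf s' = MulAut.conj a • lhdOf s := by
  let e := equivSMul (MulAut.conj a.2) s.1
  refine ⟨⟨MulAut.conj a.2 • s.1,
    ((MulAut.conj a.1).toMonoidHom.comp s.2).comp e.symm.toMonoidHom⟩, ?_⟩
  have hcomp : (((MulAut.conj a.1).toMonoidHom.comp s.2).comp e.symm.toMonoidHom).prod
      (MulAut.conj a.2 • s.1).subtype =
      ((MulAut.conj a).toMonoidHom.comp (s.2.prod s.1.subtype)).comp e.symm.toMonoidHom := by
    ext v
    · rfl
    · exact (congrArg Subtype.val (e.apply_symm_apply v)).symm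
  change MonoidHom.range _ = (lhdOf s).map (MulAut.conj a).toMonoidHom
  rw [hcomp, MonoidHom.range_comp, MonoidHom.range_eq_top.mpr e.symm.surjective,
    ← MonoidHom.range_eq_map, lhdOf, MonoidHom.map_range]

theorem lhdOf_comp (s : TriE G H) (t : TriE H K) (h : ∀ w, t.2 w ∈ s.1) :
    lhdOf (⟨t.1, s.2.comp (t.2.codRestrict s.1 h)⟩ : TriE G K) = starSub (lhdOf s) (lhdOf t) := by
  ext ⟨p, q⟩
  simp only [mem_lhdOf, mem_starSub]
  constructor
  · rintro ⟨hq, rfl⟩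
    exact ⟨t.2 ⟨q, hq⟩, ⟨h _, rfl⟩, hq, rfl⟩
  · rintro ⟨-, ⟨-, rfl⟩, hq, rfl⟩
    exact ⟨hq, rfl⟩

theorem card_centralizer_eq_of_conj_smul_lhdOf {s s' : TriE G H} {a : G × H}
    (ha : MulAut.conj a • lhdOf s = lhdOf s') :
    Nat.card (centralizer (s'.1 : Set H)) = Nat.card (centralizer (s.1 : Set H)) := by
  rw [← map_snd_lhdOf s', ← ha, map_snd_conj_smul, map_snd_lhdOf, card_centralizer_conj_smul]

theorem one_mk_mem_normalizer_lhdOf {s : TriE G H} {h : H} (hh : h ∈ centralizer (s.1 : Set H)) :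
    ((1 : G), h) ∈ normalizer (lhdOf s : Set (G × H)) :=
  centralizer_le_normalizer _ (one_mk_mem_centralizer (by rwa [map_snd_lhdOf]))

theorem one_mk_mem_normalizer_lhdOf_iff {s : TriE G H} {h : H} :
    ((1 : G), h) ∈ normalizer (lhdOf s : Set (G × H)) ↔
      h ∈ {h : H | h ∈ normalizer ((s.2.ker.map s.1.subtype : Subgroup H) : Set H) ∧
        h ∈ normalizer (s.1 : Set H) ∧ ∀ v ∈ s.1, h * v * h⁻¹ * v⁻¹ ∈ s.2.ker.map s.1.subtype} := by
  rw [one_mk_mem_normalizer_iff, map_snd_lhdOf, comap_inr_lhdOf]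
  rfl

theorem mk_one_mem_normalizer_lhdOf_iff {t : TriE H K} {h : H} :
    (h, (1 : K)) ∈ normalizer (lhdOf t : Set (H × K)) ↔ h ∈ centralizer (t.2.range : Set H) := by
  refine ⟨fun hN => ?_, fun hh => centralizer_le_normalizer _
    (mk_one_mem_centralizer (by rwa [map_fst_lhdOf]))⟩
  rw [mem_centralizer_iff]
  rintro - ⟨w, rfl⟩
  have hw : (t.2 w, (w : K)) ∈ lhdOf t := mem_lhdOf.mpr ⟨w.2, rfl⟩
  have hw' := (mem_normalizer_iff.mp hN _).mp hw
  simp only [Prod.mk_mul_mk, Prod.inv_mk, mul_one, one_mul, inv_one] at hw'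
  exact (mul_inv_eq_iff_eq_mul.mp (eq_of_mk_mem_lhdOf hw' hw)).symm

end Graph

section Pairs

variable {G H K : Type*} [Group G] [Group H] [Group K]

open Subgroup MulAction

abbrev pairConjAction : MulAction (G × H × K) (Subgroup (G × H) × Subgroup (H × K)) where
  smul x p := (MulAut.conj (x.1, x.2.1) • p.1, MulAut.conj (x.2.1, x.2.2) • p.2)
  one_smul p := by
    change (MulAut.conj (1 : G × H) • p.1, MulAut.conj (1 : H × K) • p.2) = p
    simp only [map_one, one_smul]
  mul_smul x y p := by
    change (MulAut.conj ((x.1, x.2.1) * (y.1, y.2.1)) • p.1,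
      MulAut.conj ((x.2.1, x.2.2) * (y.2.1, y.2.2)) • p.2) = _
    simp only [map_mul, mul_smul]
    rfl

attribute [local instance] pairConjAction

theorem pairConj_smul_def (x : G × H × K) (p : Subgroup (G × H) × Subgroup (H × K)) :
    x • p = (MulAut.conj (x.1, x.2.1) • p.1, MulAut.conj (x.2.1, x.2.2) • p.2) :=
  rfl

abbrev middleConjAction : MulAction H (Subgroup (G × H) × Subgroup (H × K)) :=
  compHom _ ((MonoidHom.inr G (H × K)).comp (MonoidHom.inl H K))

attribute [local instance] middleConjAction

theorem middleConj_smul_def (h : H) (p : Subgroup (G × H) × Subgroup (H × K)) :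
    h • p = (MulAut.conj ((1 : G), h) • p.1, MulAut.conj (h, (1 : K)) • p.2) :=
  rfl

def compatiblePairs (s : TriE G H) (t : TriE H K) (r : TriE G K) :
    Set (Subgroup (G × H) × Subgroup (H × K)) :=
  {p | (∃ a : G × H, MulAut.conj a • lhdOf s = p.1) ∧ (∃ b : H × K, MulAut.conj b • lhdOf t = p.2) ∧
    p.2.map (MonoidHom.fst H K) = p.1.map (MonoidHom.snd G H) ∧ lhdOf r = starSub p.1 p.2}

def transversalPair (s : TriE G H) (t : TriE H K) (z : G × H × K) :
    Subgroup (G × H) × Subgroup (H × K) :=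
  (MulAut.conj (z.1, (1 : H)) • lhdOf s, MulAut.conj (z.2.1⁻¹, z.2.2) • lhdOf t)

def rhs9Index (s : TriE G H) (t : TriE H K) (A : Finset G) (B : Finset H) (C : Finset K)
    (r : TriE G K) : Set (G × H × K) :=
  {z | (z.1 ∈ A ∧ z.2.1 ∈ B ∧ z.2.2 ∈ C) ∧
    lhdOf r = MulAut.conj (z.1, z.2.2) •
      starSub (lhdOf s) (MulAut.conj (z.2.1⁻¹, (1 : K)) • lhdOf t)}

variable {s : TriE G H} {t : TriE H K} {r r' : TriE G K} {A : Finset G} {B : Finset H}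
  {C : Finset K}

theorem smul_mem_compatiblePairs_iff {x : G × H × K}
    (hr : lhdOf r' = MulAut.conj (x.1, x.2.2) • lhdOf r) {p : Subgroup (G × H) × Subgroup (H × K)} :
    x • p ∈ compatiblePairs s t r' ↔ p ∈ compatiblePairs s t r := by
  simp only [compatiblePairs, Set.mem_ofPred_eq, pairConj_smul_def,
    exists_conj_smul_eq_conj_smul_iff, map_fst_conj_smul, map_snd_conj_smul, smul_left_cancel_iff,
    starSub_conj_smul, hr]

theorem middleConj_smul_mem_compatiblePairs_iff (h : H) {p : Subgroup (G × H) × Subgroup (H × K)} :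
    h • p ∈ compatiblePairs s t r ↔ p ∈ compatiblePairs s t r :=
  smul_mem_compatiblePairs_iff (x := ((1 : G), h, (1 : K))) (by simp [← Prod.one_eq_mk])

theorem card_compatiblePairs_eq_of_conj_smul {x : G × K}
    (hr : MulAut.conj x • lhdOf r = lhdOf r') :
    Nat.card (compatiblePairs s t r) = Nat.card (compatiblePairs s t r') :=
  Nat.card_congr <| Equiv.subtypeEquiv (MulAction.toPerm ((x.1, (1 : H), x.2) : G × H × K))
    fun _ => (smul_mem_compatiblePairs_iff hr.symm).symm

theorem compatiblePairs_eq_empty (h : ¬ ∃ h : H, MulAut.conj h • s.1 = t.2.range) :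
    compatiblePairs s t r = ∅ := by
  refine Set.eq_empty_of_forall_notMem fun ⟨L', M'⟩ => ?_
  rintro ⟨⟨a, rfl⟩, ⟨b, rfl⟩, hmatch, -⟩
  rw [map_fst_conj_smul, map_snd_conj_smul, map_fst_lhdOf, map_snd_lhdOf] at hmatch
  exact h ⟨b.1⁻¹ * a.2, by rw [map_mul, mul_smul, ← hmatch, map_inv, inv_smul_smul]⟩

theorem compatiblePairs_subset_range_lhdOf :
    compatiblePairs s t r ⊆ Set.range (Prod.map lhdOf lhdOf) := by
  rintro ⟨L', M'⟩ ⟨⟨a, rfl⟩, ⟨b, rfl⟩, -⟩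
  obtain ⟨s', hs'⟩ := exists_lhdOf_eq_conj_smul a s
  obtain ⟨t', ht'⟩ := exists_lhdOf_eq_conj_smul b t
  exact ⟨(s', t'), Prod.ext hs' ht'⟩

theorem ghostMul_orbSum_apply [Finite G] [Finite H] [Finite K] :
    ghostMul (orbSum s) (orbSum t) r =
      (Nat.card (centralizer (s.1 : Set H)) / Nat.card H : ℚ) *
        Nat.card (compatiblePairs s t r) := by
  have (V : Subgroup H) : Finite (V →* G) := Finite.of_injective _ DFunLike.coe_injective
  have (W : Subgroup K) : Finite (W →* H) := Finite.of_injective _ DFunLike.coe_injective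
  have := Fintype.ofFinite (TriE G H)
  have := Fintype.ofFinite (TriE H K)
  set c := (Nat.card (centralizer (s.1 : Set H)) / Nat.card H : ℚ)
  simp only [ghostMul, finsum_eq_sum_of_fintype]
  rw [← Fintype.sum_prod_type']
  calc ∑ p, _ = ∑ p : TriE G H × TriE H K,
        if (lhdOf p.1, lhdOf p.2) ∈ compatiblePairs s t r then c else 0 := by
        refine Finset.sum_congr rfl fun ⟨s', t'⟩ _ => ?_
        by_cases hst : t'.2.range = s'.1
        · rw [dif_pos hst]
          simp only [← lhdOf_injective.eq_iff, lhdOf_comp, orbSum, map_conj_toMonoidHom,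
            compatiblePairs, Set.mem_ofPred_eq, map_fst_lhdOf, map_snd_lhdOf, hst, true_and]
          by_cases ha : ∃ a : G × H, MulAut.conj a • lhdOf s = lhdOf s'
          · rw [card_centralizer_eq_of_conj_smul_lhdOf ha.choose_spec]
            simp only [ha, if_true, true_and, mul_one]
            split_ifs <;> simp_all [c]
          · simp only [ha, if_false, false_and, mul_zero, zero_mul, ite_self]
        · rw [dif_neg hst, if_neg]
          rintro ⟨-, -, h, -⟩
          rw [map_fst_lhdOf, map_snd_lhdOf] at h
          exact hst h
    _ = c * Nat.card (compatiblePairs s t r) := by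
        rw [← Finset.sum_filter, Finset.sum_const, nsmul_eq_mul, mul_comm, ← Fintype.card_subtype,
          ← Nat.card_eq_fintype_card]
        congr 2
        exact Nat.card_preimage_of_injective (lhdOf_injective.prodMap lhdOf_injective)
          compatiblePairs_subset_range_lhdOf

theorem rhs9_eq_card : rhs9 s t A B C r = Nat.card (rhs9Index s t A B C r) := by
  have hI : rhs9Index s t A B C r = ↑((A ×ˢ B ×ˢ C).filter fun z => lhdOf r =
      MulAut.conj (z.1, z.2.2) • starSub (lhdOf s) (MulAut.conj (z.2.1⁻¹, (1 : K)) • lhdOf t)) := by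
    ext z
    simp [rhs9Index]
  rw [hI, Nat.card_coe_set_eq, Set.ncard_coe_finset, Finset.card_filter, Nat.cast_sum,
    Finset.sum_product, rhs9]
  refine Finset.sum_congr rfl fun g _ => ?_
  rw [Finset.sum_product]
  push_cast
  rfl

theorem transversalPair_mem_compatiblePairs_iff (hV : t.2.range = s.1) {z : G × H × K}
    (hz : z.2.1 ∈ normalizer (s.1 : Set H)) :
    transversalPair s t z ∈ compatiblePairs s t r ↔
      lhdOf r = MulAut.conj (z.1, z.2.2) •
        starSub (lhdOf s) (MulAut.conj (z.2.1⁻¹, (1 : K)) • lhdOf t) := by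
  have hstar : starSub (transversalPair s t z).1 (transversalPair s t z).2 =
      MulAut.conj (z.1, z.2.2) • starSub (lhdOf s) (MulAut.conj (z.2.1⁻¹, (1 : K)) • lhdOf t) := by
    rw [← starSub_conj_smul, transversalPair, smul_smul, ← map_mul]
    congr 3
    simp
  have hmatch : (transversalPair s t z).2.map (MonoidHom.fst H K) =
      (transversalPair s t z).1.map (MonoidHom.snd G H) := by
    rw [transversalPair, map_fst_conj_smul, map_snd_conj_smul, map_fst_lhdOf, map_snd_lhdOf, hV,
      conj_smul_eq_self_iff.mpr (inv_mem hz), map_one, one_smul]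
  constructor
  · rintro ⟨-, -, -, h⟩
    rwa [hstar] at h
  · exact fun h => ⟨⟨_, rfl⟩, ⟨_, rfl⟩, hmatch, h.trans hstar.symm⟩

theorem stabilizer_transversalPair (hV : t.2.range = s.1) {z : G × H × K}
    (hz : z.2.1 ∈ normalizer (s.1 : Set H)) :
    stabilizer H (transversalPair s t z) = centralizer (s.1 : Set H) := by
  ext h
  rw [mem_stabilizer_iff, middleConj_smul_def, transversalPair, Prod.mk.injEq, smul_smul,
    smul_smul, ← map_mul, ← map_mul, conj_smul_eq_conj_smul_iff, conj_smul_eq_conj_smul_iff]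
  have e1 : (z.1, (1 : H))⁻¹ * (((1 : G), h) * (z.1, 1)) = ((1 : G), h) := by ext <;> simp
  have e2 : (z.2.1⁻¹, z.2.2)⁻¹ * ((h, (1 : K)) * (z.2.1⁻¹, z.2.2)) =
      (z.2.1 * h * z.2.1⁻¹, (1 : K)) := by ext <;> simp [mul_assoc]
  rw [e1, e2, mk_one_mem_normalizer_lhdOf_iff, hV]
  constructor
  · rintro ⟨-, hh⟩
    simpa [mul_assoc] using conj_mem_centralizer_of_mem_normalizer (inv_mem hz) hh
  · exact fun hh => ⟨one_mk_mem_normalizer_lhdOf hh, conj_mem_centralizer_of_mem_normalizer hz hh⟩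

theorem exists_smul_transversalPair_eq (hV : t.2.range = s.1) (hC : isChoice s t A B C)
    {p : Subgroup (G × H) × Subgroup (H × K)} (hp : p ∈ compatiblePairs s t r) :
    ∃ z : G × H × K, (z.1 ∈ A ∧ z.2.1 ∈ B ∧ z.2.2 ∈ C) ∧
      ∃ h : H, h • transversalPair s t z = p := by
  obtain ⟨L', M'⟩ := p
  obtain ⟨⟨x, rfl⟩, ⟨y, rfl⟩, hmatch, -⟩ := hp
  -- Move the outer coordinates into `𝒜` and `𝒞` along the normalisers; the middle coordinates
  -- then differ by an element of `N_H(V)`, which `ℬ` absorbs modulo `C_H(ker α, V)`.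
  obtain ⟨a, ⟨ha, n, hn, hna⟩, -⟩ := hC.1 x.1
  obtain ⟨c, ⟨hc, m, hm, hmc⟩, -⟩ := hC.2.2.2 y.2
  have hx : MulAut.conj x • lhdOf s = MulAut.conj (a, (x * n).2) • lhdOf s := by
    rw [show (a, (x * n).2) = x * n from Prod.ext (by simp_all) rfl, map_mul, mul_smul,
      conj_smul_eq_self_iff.mpr hn]
  have hy : MulAut.conj y • lhdOf t = MulAut.conj ((y * m).1, c) • lhdOf t := by
    rw [show ((y * m).1, c) = y * m from Prod.ext rfl (by simp_all), map_mul, mul_smul,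
      conj_smul_eq_self_iff.mpr hm]
  rw [hx, hy] at hmatch ⊢
  rw [map_fst_conj_smul, map_snd_conj_smul, map_fst_lhdOf, map_snd_lhdOf, hV,
    conj_smul_eq_conj_smul_iff] at hmatch
  obtain ⟨b, ⟨hb, hbD⟩, -⟩ := hC.2.2.1 _ (inv_mem hmatch)
  rw [inv_inv, ← one_mk_mem_normalizer_lhdOf_iff] at hbD
  refine ⟨(a, b, c), ⟨ha, hb, hc⟩, (y * m).1 * b, ?_⟩
  rw [middleConj_smul_def, transversalPair, smul_smul, smul_smul, ← map_mul, ← map_mul]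
  refine Prod.ext (conj_smul_eq_conj_smul_iff.mpr ?_) ?_
  · convert hbD using 1
    ext <;> simp [mul_assoc]
  · dsimp only
    congr 2
    ext <;> simp

theorem eq_of_smul_transversalPair_eq (hV : t.2.range = s.1) (hC : isChoice s t A B C)
    {z z' : G × H × K} (hz : z.1 ∈ A ∧ z.2.1 ∈ B ∧ z.2.2 ∈ C)
    (hz' : z'.1 ∈ A ∧ z'.2.1 ∈ B ∧ z'.2.2 ∈ C) {h : H}
    (he : h • transversalPair s t z = transversalPair s t z') : z = z' := by
  obtain ⟨a, b, c⟩ := z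
  obtain ⟨a', b', c'⟩ := z'
  obtain ⟨ha, hb, hc⟩ := hz
  obtain ⟨ha', hb', hc'⟩ := hz'
  rw [middleConj_smul_def, transversalPair, transversalPair, Prod.mk.injEq, smul_smul, smul_smul,
    ← map_mul, ← map_mul, conj_smul_eq_conj_smul_iff, conj_smul_eq_conj_smul_iff] at he
  obtain ⟨hL, hM⟩ := he
  have e1 : (a', (1 : H))⁻¹ * (((1 : G), h) * (a, 1)) = (a'⁻¹ * a, h) := by ext <;> simp
  have e2 : (b'⁻¹, c')⁻¹ * ((h, (1 : K)) * (b⁻¹, c)) = (b' * h * b⁻¹, c'⁻¹ * c) := by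
    ext <;> simp [mul_assoc]
  dsimp only at hL hM
  rw [e1] at hL
  rw [e2] at hM
  obtain rfl : a = a' := (hC.1 a').unique ⟨ha, _, hL, rfl⟩ ⟨ha', by simp⟩
  obtain rfl : c = c' := (hC.2.2.2 c').unique ⟨hc, _, hM, rfl⟩ ⟨hc', by simp⟩
  simp only [inv_mul_cancel] at hL hM
  rw [mk_one_mem_normalizer_lhdOf_iff, hV] at hM
  have hb'N := hC.2.1 b' hb'
  have hbb' : ((1 : G), b'⁻¹ * b) ∈ normalizer (lhdOf s : Set (G × H)) := by
    have := one_mk_mem_normalizer_lhdOf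
      (conj_mem_centralizer_of_mem_normalizer (inv_mem hb'N) (inv_mem hM))
    convert mul_mem this hL using 1
    ext <;> simp [mul_assoc]
  obtain rfl : b = b' := (hC.2.2.1 b' hb'N).unique ⟨hb, one_mk_mem_normalizer_lhdOf_iff.mp hbb'⟩
    ⟨hb', one_mk_mem_normalizer_lhdOf_iff.mp
      (by rw [inv_mul_cancel, ← Prod.one_eq_mk]; exact one_mem _)⟩
  rfl

theorem card_compatiblePairs_mul_card_centralizer [Finite H] (hV : t.2.range = s.1)
    (hC : isChoice s t A B C) :
    Nat.card (compatiblePairs s t r) * Nat.card (centralizer (s.1 : Set H)) =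
      Nat.card (rhs9Index s t A B C r) * Nat.card H := by
  have : Finite (rhs9Index s t A B C r) :=
    ((A ×ˢ B ×ˢ C).finite_toSet.subset fun z hz => by simpa using hz.1).to_subtype
  refine card_mul_eq_of_existsUnique_mem_orbit (S := compatiblePairs s t r)
    (fun z : rhs9Index s t A B C r => transversalPair s t z)
    (fun h p hp => (middleConj_smul_mem_compatiblePairs_iff h).mpr hp)
    (fun z => (transversalPair_mem_compatiblePairs_iff hV (hC.2.1 _ z.2.1.2.1)).mpr z.2.2) ?_
    (fun z => by rw [stabilizer_transversalPair hV (hC.2.1 _ z.2.1.2.1)])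
  intro p hp
  obtain ⟨z, hz, h, rfl⟩ := exists_smul_transversalPair_eq hV hC hp
  have hzI : z ∈ rhs9Index s t A B C r :=
    ⟨hz, (transversalPair_mem_compatiblePairs_iff hV (hC.2.1 _ hz.2.1)).mp
      ((middleConj_smul_mem_compatiblePairs_iff h).mp hp)⟩
  refine ⟨⟨z, hzI⟩, ⟨h⁻¹, inv_smul_smul h _⟩, ?_⟩
  rintro ⟨z', hz'⟩ ⟨γ, hγ⟩
  exact Subtype.ext (eq_of_smul_transversalPair_eq hV hC hz hz'.1 (by rwa [mul_smul])).symm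

theorem ghostMul_orbSum_eq_rhs9 [Finite G] [Finite H] [Finite K] (hV : t.2.range = s.1)
    (hC : isChoice s t A B C) : ghostMul (orbSum s) (orbSum t) = rhs9 s t A B C := by
  funext r
  have hH : (Nat.card H : ℚ) ≠ 0 := Nat.cast_ne_zero.mpr Nat.card_pos.ne'
  rw [ghostMul_orbSum_apply, rhs9_eq_card, div_mul_eq_mul_div, div_eq_iff hH]
  exact_mod_cast (mul_comm _ _).trans (card_compatiblePairs_mul_card_centralizer hV hC)

end Pairs

/-- the product formula for orbit sums in the ghost algebra.
(a) If `V = s.1` and `V' = t.2.range` are not `H`-conjugate then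
`[U,α,V]⁺ ·_H [V',β,W]⁺ = 0`.
(b) If `V = V'`, then for every admissible choice of transversals
`(𝒜, ℬ, 𝒞)` the product `[U,α,V]⁺ ·_H [V,β,W]⁺` equals
`Σ_{(g,h,k) ∈ 𝒜×ℬ×𝒞} ⁽ᵍ'ᵏ⁾(U, α∘c_{h⁻¹}∘β, W)`; moreover this sum is
independent of the choice of `(𝒜, ℬ, 𝒞)`, has integer coefficients and is
fixed by the `G × K`-action. -/
theorem stmt9 {G H K : Type*} [Group G] [Group H] [Group K]
    [Finite G] [Finite H] [Finite K] (s : TriE G H) (t : TriE H K) :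
    (¬ (∃ h : H, Subgroup.map (MulAut.conj h).toMonoidHom s.1 = t.2.range) →
      ghostMul (orbSum s) (orbSum t) = 0) ∧
    (t.2.range = s.1 →
      (∀ A B C, isChoice s t A B C →
        ghostMul (orbSum s) (orbSum t) = rhs9 s t A B C) ∧
      (∀ A B C A' B' C', isChoice s t A B C → isChoice s t A' B' C' →
        rhs9 s t A B C = rhs9 s t A' B' C') ∧
      (∀ A B C, isChoice s t A B C →
        (∀ r : TriE G K, ∃ n : ℤ, rhs9 s t A B C r = n) ∧
        (∀ (x : G × K) (r r' : TriE G K),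
          Subgroup.map (MulAut.conj x).toMonoidHom (lhdOf r) = lhdOf r' →
          rhs9 s t A B C r = rhs9 s t A B C r'))) := by
  refine ⟨fun hncj => funext fun r => ?_, fun hV => ?_⟩
  · simp [ghostMul_orbSum_apply, compatiblePairs_eq_empty hncj]
  refine ⟨fun A B C hC => ghostMul_orbSum_eq_rhs9 hV hC,
    fun A B C A' B' C' hC hC' =>
      (ghostMul_orbSum_eq_rhs9 hV hC).symm.trans (ghostMul_orbSum_eq_rhs9 hV hC'),
    fun A B C hC => ⟨fun r => ⟨Nat.card (rhs9Index s t A B C r), by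
      rw [rhs9_eq_card, Int.cast_natCast]⟩, fun x r r' hr => ?_⟩⟩
  rw [← ghostMul_orbSum_eq_rhs9 hV hC, ghostMul_orbSum_apply, ghostMul_orbSum_apply,
    card_compatiblePairs_eq_of_conj_smul hr]
end

section
/- Let R be a field of positive characteristic p, let G be a finite group whose order is divisible by p, and let H be a subgroup of G whose order is not divisible by p. Then the Jacobson radical of the endomorphism ring End_{RG}(Ind_H^G(R)) is nonzero. -/
/-!
Let `X = G ⧸ H`; since `|G| = |H| · |X|` and `p ∤ |H|`, we have `|X| = 0` in `R`. The permutation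
module `R[X]` carries the rank-one endomorphism `J v = (∑ₓ vₓ) • N` with `N = ∑ₓ x` (the all-ones
matrix). For every endomorphism `a`, `a N` is `G`-invariant, so by transitivity its coefficients
are all equal and their sum is a multiple of `|X| = 0`; hence `J a J = 0`. Then `(y J)² = 0` for
all `y`, so each `1 + y J` is a unit and the nonzero element `J` lies in the Jacobson radical.
-/

open CategoryTheory MonoidAlgebra

theorem Ideal.mem_jacobson_bot_of_forall_mul_mul_eq_zero {A : Type*} [Ring A] {x : A}
    (hx : ∀ a, x * a * x = 0) : x ∈ (⊥ : Ideal A).jacobson := by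
  refine Ideal.mem_jacobson_iff.mpr fun y => ⟨1 - y * x, ?_⟩
  have hyx : y * x * (y * x) = 0 := by rw [mul_assoc, ← mul_assoc x, hx, mul_zero]
  have : (1 - y * x) * y * x + (1 - y * x) - 1 = -(y * x * (y * x)) := by noncomm_ring
  rw [this, hyx, neg_zero]
  exact Submodule.zero_mem _

lemma Subgroup.natCast_card_quotient_eq_zero {R : Type*} [Semiring R] {p : ℕ} [CharP R p]
    (hp : p.Prime) {G : Type*} [Group G] (H : Subgroup G)
    (hG : p ∣ Nat.card G) (hH : ¬ p ∣ Nat.card H) : (Nat.card (G ⧸ H) : R) = 0 := by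
  rw [← H.card_mul_index] at hG
  exact (CharP.cast_eq_zero_iff R p _).mpr ((hp.dvd_mul.mp hG).resolve_left hH)

namespace MonoidAlgebra

variable {k X : Type*} [Semiring k] [Fintype X]

noncomputable def coeffSum : k[X] →ₗ[k] k :=
  ∑ x : X, Finsupp.lapply x ∘ₗ (coeffLinearEquiv k).toLinearMap

lemma coeffSum_apply (f : k[X]) : coeffSum f = ∑ x, f.coeff x := by
  simp [coeffSum, coeffLinearEquiv]

lemma coeffSum_single [DecidableEq X] (x : X) (r : k) : coeffSum (single x r) = r := by
  simp [coeffSum_apply, coeff_single, Finsupp.single_apply]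

noncomputable def allOnes : k[X] := ∑ x : X, single x 1

@[simp]
lemma coeff_allOnes (x : X) : (allOnes : k[X]).coeff x = 1 := by
  classical
  simp [allOnes, coeff_sum, coeff_single, Finsupp.single_apply]

end MonoidAlgebra

namespace Representation

section Semiring

variable {k G X : Type*} [Semiring k] [Group G] [MulAction G X]

lemma coeff_eq_of_forall_ofMulAction_eq [MulAction.IsPretransitive G X] {f : k[X]}
    (hf : ∀ g, ofMulAction k G X g f = f) (x y : X) : f.coeff x = f.coeff y := by
  obtain ⟨g, rfl⟩ := MulAction.exists_smul_eq G y x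
  calc f.coeff (g • y) = (ofMulAction k G X g⁻¹ f).coeff y := by rw [coeff_ofMulAction, inv_inv]
    _ = f.coeff y := by rw [hf]

variable [Fintype X]

@[simp]
lemma ofMulAction_allOnes (g : G) : ofMulAction k G X g allOnes = allOnes := by
  ext x
  simp

@[simp]
lemma coeffSum_ofMulAction (g : G) (f : k[X]) :
    coeffSum (ofMulAction k G X g f) = coeffSum f := by
  simp only [coeffSum_apply, coeff_ofMulAction]
  exact Equiv.sum_comp (MulAction.toPerm g⁻¹) (fun x => f.coeff x)

lemma coeffSum_eq_zero_of_forall_ofMulAction_eq [MulAction.IsPretransitive G X]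
    (hX : (Nat.card X : k) = 0) {f : k[X]} (hf : ∀ g, ofMulAction k G X g f = f) :
    coeffSum f = 0 := by
  rcases isEmpty_or_nonempty X with _ | ⟨⟨x⟩⟩
  · simp [coeffSum_apply]
  · rw [coeffSum_apply, Finset.sum_congr rfl fun y _ => coeff_eq_of_forall_ofMulAction_eq hf y x,
      Finset.sum_const, Finset.card_univ, nsmul_eq_mul, ← Nat.card_eq_fintype_card, hX, zero_mul]

end Semiring

variable {k G X : Type*} [CommSemiring k] [Group G] [MulAction G X] [Fintype X]

noncomputable def allOnesMap : IntertwiningMap (ofMulAction k G X) (ofMulAction k G X) :=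
  (coeffSum.smulRight allOnes).intertwiningMap_of_isIntertwiningMap _ _ fun g f => by simp

lemma allOnesMap_apply (f : k[X]) : allOnesMap (G := G) f = coeffSum f • allOnes := rfl

end Representation

namespace Rep

open Representation

variable {k G X : Type*} [CommRing k] [Group G] [MulAction G X]

noncomputable def allOnesEnd [Fintype X] : End (Rep.of (Representation.ofMulAction k G X)) :=
  Rep.ofHom allOnesMap

lemma allOnesEnd_mul_mul_allOnesEnd [Fintype X] [MulAction.IsPretransitive G X]
    (hX : (Nat.card X : k) = 0) (a : End (Rep.of (Representation.ofMulAction k G X))) :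
    allOnesEnd * a * allOnesEnd = 0 := by
  have ha : coeffSum (a.hom allOnes) = 0 :=
    coeffSum_eq_zero_of_forall_ofMulAction_eq (G := G) hX fun g => by
      simpa using (hom_comm_apply a g allOnes).symm
  refine Rep.hom_ext (IntertwiningMap.ext (LinearMap.ext fun f => ?_))
  show allOnesMap (G := G) (a.hom (allOnesMap f)) = 0
  rw [allOnesMap_apply, allOnesMap_apply, map_smul, map_smul, ha, smul_zero, zero_smul]

lemma allOnesEnd_ne_zero [Fintype X] [Nontrivial k] [Nonempty X] :
    (allOnesEnd : End (Rep.of (Representation.ofMulAction k G X))) ≠ 0 := by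
  classical
  obtain ⟨x⟩ := ‹Nonempty X›
  intro h
  have h1 : allOnesMap (G := G) (single x (1 : k)) = 0 := congr($(h).hom (single x 1))
  rw [allOnesMap_apply, coeffSum_single, one_smul] at h1
  simpa using congr($(h1).coeff x)

theorem jacobson_bot_end_ofMulAction_ne_bot [Nontrivial k] [MulAction.IsPretransitive G X]
    [Finite X] [Nonempty X] (hX : (Nat.card X : k) = 0) :
    (⊥ : Ideal (End (Rep.of (Representation.ofMulAction k G X)))).jacobson ≠ ⊥ := by
  have := Fintype.ofFinite X
  intro h
  have hmem := Ideal.mem_jacobson_bot_of_forall_mul_mul_eq_zero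
    (allOnesEnd_mul_mul_allOnesEnd (G := G) hX)
  rw [h, Submodule.mem_bot] at hmem
  exact allOnesEnd_ne_zero hmem

end Rep

/-- Let `R` be a field of positive characteristic `p`, `G` a finite
group with `p ∣ |G|` and `H ≤ G` with `p ∤ |H|`.  Then the Jacobson radical of
`End_{RG}(Ind_H^G R)` is nonzero.  Here `Ind_H^G R` is realized (as in the
statement's context) as the permutation module `R[G/H]`, i.e. the representation
of `G` on the free `R`-module on the cosets `G ⧸ H`, and `End_{RG}` is its
endomorphism ring in the category `Rep R G` of `R`-linear representations. -/
theorem stmt13 {R : Type} [Field R] {p : ℕ} (hp : p.Prime) [CharP R p]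
    {G : Type} [Group G] [Finite G] (H : Subgroup G)
    (hG : p ∣ Nat.card G) (hH : ¬ p ∣ Nat.card ↥H) :
    (⊥ : Ideal (End (Rep.of (Representation.ofMulAction R G (G ⧸ H))))).jacobson ≠ ⊥ :=
  Rep.jacobson_bot_end_ofMulAction_ne_bot (H.natCast_card_quotient_eq_zero hp hG hH)
end

section
/- Let p be a prime and S a finite p-group. The maps 𝒻 ↦ 𝒮(𝒻) := {Δ(φ(P),φ,P) : P ≤ S, φ ∈ Hom_𝒻(P,S)} and 𝒮 ↦ 𝒻(𝒮), where Hom_{𝒻(𝒮)}(P,Q) := {ι∘φ : Δ(φ(P),φ,P) ∈ 𝒮 and φ(P) ≤ Q} (ι the inclusion φ(P) → Q), are mutually inverse isomorphisms of partially ordered sets between the set Fus(S) of fusion systems on S (ordered by inclusion of morphism sets) and the set Sys(S) (ordered by inclusion). -/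
/-- A fusion system on a group `S` (morphisms `P → Q` are encoded as injective
homomorphisms `↥P →* S` with range contained in `Q`). -/
structure FusionSystem (S : Type*) [Group S] where
  Hom : ∀ (P : Subgroup S), Subgroup S → Set (↥P →* S)
  range_le : ∀ {P Q : Subgroup S} {φ : ↥P →* S}, φ ∈ Hom P Q → φ.range ≤ Q
  injective : ∀ {P Q : Subgroup S} {φ : ↥P →* S}, φ ∈ Hom P Q → Function.Injective φ
  conj_mem : ∀ (P Q : Subgroup S) (s : S) (φ : ↥P →* S),
    (∀ p : ↥P, φ p = s * p * s⁻¹) → φ.range ≤ Q → φ ∈ Hom P Q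
  comp_mem : ∀ {P Q R : Subgroup S} {φ : ↥P →* S} {ψ : ↥Q →* S} (χ : ↥P →* S),
    φ ∈ Hom P Q → ψ ∈ Hom Q R →
    (∀ (x : ↥P) (y : ↥Q), (y : S) = φ x → χ x = ψ y) → χ ∈ Hom P R
  isoOnto_mem : ∀ {P Q : Subgroup S} {φ : ↥P →* S}, φ ∈ Hom P Q → φ ∈ Hom P φ.range
  inv_mem : ∀ {P Q : Subgroup S} {φ : ↥P →* S}, φ ∈ Hom P Q →
    ∀ ψ : ↥φ.range →* S, (∀ (x : ↥P) (y : ↥φ.range), (y : S) = φ x → ψ y = x) →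
      ψ ∈ Hom φ.range P

/-- A subgroup `L ≤ S × S` is twisted diagonal iff `k₁(L) = 1` and `k₂(L) = 1`. -/
def IsTwistedDiagonal {S : Type*} [Group S] (L : Subgroup (S × S)) : Prop :=
  (∀ g : S, (g, (1 : S)) ∈ L → g = 1) ∧ (∀ h : S, ((1 : S), h) ∈ L → h = 1)

/-- The opposite of a subgroup `L ≤ G × H`: `L° = {(h,g) | (g,h) ∈ L}`. -/
def opSub {G H : Type*} [Group G] [Group H] (L : Subgroup (G × H)) : Subgroup (H × G) :=
  L.comap ((MonoidHom.snd H G).prod (MonoidHom.fst H G))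

/-- The diagonal subgroup `Δ(S) ≤ S × S`. -/
def deltaS (S : Type*) [Group S] : Subgroup (S × S) :=
  ((MonoidHom.id S).prod (MonoidHom.id S)).range

/-- Membership in `Sys(S)`. -/
def IsSys {S : Type*} [Group S] (𝒮 : Set (Subgroup (S × S))) : Prop :=
  (∀ L ∈ 𝒮, IsTwistedDiagonal L) ∧
  (∀ L ∈ 𝒮, ∀ a : S × S, Subgroup.map (MulAut.conj a).toMonoidHom L ∈ 𝒮) ∧
  (∀ L ∈ 𝒮, ∀ M : Subgroup (S × S), M ≤ L → M ∈ 𝒮) ∧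
  (∀ L ∈ 𝒮, ∀ M ∈ 𝒮, starSub L M ∈ 𝒮) ∧
  (∀ L ∈ 𝒮, opSub L ∈ 𝒮) ∧
  deltaS S ∈ 𝒮

/-- The graph `Δ(φ(P),φ,P) = {(φ u, u) : u ∈ P}` of a morphism `φ : P → S`. -/
def fusGraph {S : Type*} [Group S] {P : Subgroup S} (φ : ↥P →* S) : Subgroup (S × S) :=
  (φ.prod P.subtype).range

/-- The set `𝒮(𝒻)` of graphs of morphisms of a fusion system `𝒻`. -/
def SOf {S : Type*} [Group S] (𝒻 : FusionSystem S) : Set (Subgroup (S × S)) :=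
  {L | ∃ (P : Subgroup S) (φ : ↥P →* S), φ ∈ 𝒻.Hom P ⊤ ∧ L = fusGraph φ}



section Helpers
variable {S : Type*} [Group S]

lemma mem_fusGraph {P : Subgroup S} {φ : ↥P →* S} {x : S × S} :
    x ∈ fusGraph φ ↔ ∃ u : ↥P, φ u = x.1 ∧ (u : S) = x.2 := by
  constructor
  · rintro ⟨u, hu⟩
    exact ⟨u, congrArg Prod.fst hu, congrArg Prod.snd hu⟩
  · rintro ⟨u, h1, h2⟩
    exact ⟨u, Prod.ext h1 h2⟩

lemma mk_mem_fusGraph {P : Subgroup S} (φ : ↥P →* S) (u : ↥P) :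
    (φ u, (u : S)) ∈ fusGraph φ := ⟨u, rfl⟩

/-- Target monotonicity of Hom. -/
lemma hom_mono {𝒻 : FusionSystem S} {P Q Q' : Subgroup S} {φ : ↥P →* S}
    (h : φ ∈ 𝒻.Hom P Q) (h' : φ.range ≤ Q') : φ ∈ 𝒻.Hom P Q' := by
  have h1 : φ ∈ 𝒻.Hom P φ.range := 𝒻.isoOnto_mem h
  have h2 : (φ.range).subtype ∈ 𝒻.Hom φ.range Q' := by
    apply 𝒻.conj_mem _ _ 1
    · intro p; simp
    · rw [Subgroup.range_subtype]; exact h'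
  exact 𝒻.comp_mem φ h1 h2 (fun x y hy => hy.symm)

/-- Extraction: every twisted diagonal subgroup is the graph of some hom. -/
lemma extract {L : Subgroup (S × S)} (hL : IsTwistedDiagonal L) :
    ∃ (P : Subgroup S) (φ : ↥P →* S), L = fusGraph φ := by
  set P := Subgroup.map (MonoidHom.snd S S) L with hP
  have hex : ∀ u : ↥P, ∃ g : S, (g, (u : S)) ∈ L := by
    rintro ⟨u, hu⟩
    obtain ⟨⟨g, v⟩, hg, hv⟩ := hu
    exact ⟨g, by simpa [MonoidHom.snd] using hv ▸ hg⟩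
  choose f hf using hex
  -- uniqueness from k₁
  have huniq : ∀ (g g' : S) (u : S), (g, u) ∈ L → (g', u) ∈ L → g = g' := by
    intro g g' u h1 h2
    have : (g * g'⁻¹, (1:S)) ∈ L := by
      have := mul_mem h1 (inv_mem h2)
      simpa using this
    exact mul_inv_eq_one.mp (hL.1 _ this)
  have hmul : ∀ u v : ↥P, f (u * v) = f u * f v := by
    intro u v
    exact huniq _ _ _ (hf (u * v)) (by simpa using mul_mem (hf u) (hf v))
  refine ⟨P, MonoidHom.mk' f hmul, ?_⟩
  ext ⟨g, u⟩
  rw [mem_fusGraph]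
  constructor
  · intro h
    have hu : u ∈ P := ⟨(g, u), h, rfl⟩
    exact ⟨⟨u, hu⟩, huniq _ _ _ (hf ⟨u, hu⟩) h, rfl⟩
  · rintro ⟨w, h1, h2⟩
    have := hf w
    rw [h2, show f w = g from h1] at this
    exact this

end Helpers

section Construct
variable {S : Type*} [Group S]

lemma sysFus {𝒮 : Set (Subgroup (S × S))} (h𝒮 : IsSys 𝒮) :
    ∃ 𝒻 : FusionSystem S, ∀ (P Q : Subgroup S) (φ : ↥P →* S),
      φ ∈ 𝒻.Hom P Q ↔ (fusGraph φ ∈ 𝒮 ∧ φ.range ≤ Q) := by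
  obtain ⟨htd, hconj, hsub, hstar, hop, hdelta⟩ := h𝒮
  refine ⟨⟨fun P Q => {φ | fusGraph φ ∈ 𝒮 ∧ φ.range ≤ Q}, fun h => h.2, ?_, ?_, ?_, ?_, ?_⟩,
    fun P Q φ => Iff.rfl⟩
  · -- injective
    rintro P Q φ ⟨hg, -⟩ x y hxy
    have h1 : (φ (x * y⁻¹), ((x * y⁻¹ : ↥P) : S)) ∈ fusGraph φ := mk_mem_fusGraph φ _
    have h2 : φ (x * y⁻¹) = 1 := by
      rw [map_mul, map_inv, hxy, mul_inv_cancel]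
    rw [h2] at h1
    have h3 := (htd _ hg).2 _ h1
    have : x * y⁻¹ = 1 := Subtype.ext (by simpa using h3)
    exact mul_inv_eq_one.mp this
  · -- conj_mem
    intro P Q s φ hφ hr
    refine ⟨hsub _ (hconj _ hdelta (s, 1)) _ ?_, hr⟩
    rintro ⟨g, u⟩ hx
    rw [mem_fusGraph] at hx
    obtain ⟨w, h1, h2⟩ := hx
    replace h1 : φ w = g := h1
    replace h2 : (w : S) = u := h2
    refine ⟨((w : S), (w : S)), ⟨w, rfl⟩, ?_⟩
    simp only [MulEquiv.coe_toMonoidHom, MulAut.conj_apply]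
    simp [Prod.ext_iff, ← h1, ← h2, hφ w]
  · -- comp_mem
    rintro P Q R φ ψ χ ⟨hφg, hφr⟩ ⟨hψg, hψr⟩ hcomm
    constructor
    · have hgeq : fusGraph χ = starSub (fusGraph ψ) (fusGraph φ) := by
        ext ⟨g, k⟩
        rw [mem_fusGraph]
        constructor
        · rintro ⟨x, h1, h2⟩
          replace h1 : χ x = g := h1
          replace h2 : (x : S) = k := h2
          refine ⟨φ x, mem_fusGraph.mpr ⟨⟨φ x, hφr ⟨x, rfl⟩⟩, ?_, rfl⟩,
            mem_fusGraph.mpr ⟨x, rfl, h2⟩⟩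
          rw [← h1]; exact (hcomm x _ rfl).symm
        · rintro ⟨h, hL, hM⟩
          rw [mem_fusGraph] at hL hM
          obtain ⟨y, hy1, hy2⟩ := hL
          obtain ⟨x, hx1, hx2⟩ := hM
          replace hy1 : ψ y = g := hy1
          replace hy2 : (y : S) = h := hy2
          replace hx1 : φ x = h := hx1
          replace hx2 : (x : S) = k := hx2
          refine ⟨x, ?_, hx2⟩
          rw [hcomm x y (by rw [hy2, hx1]), hy1]
      rw [hgeq]
      exact hstar _ hψg _ hφg
    · rintro g ⟨x, rfl⟩
      have : χ x = ψ ⟨φ x, hφr ⟨x, rfl⟩⟩ := hcomm x _ rfl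
      rw [this]
      exact hψr ⟨_, rfl⟩
  · -- isoOnto_mem
    rintro P Q φ ⟨hg, -⟩
    exact ⟨hg, le_refl _⟩
  · -- inv_mem
    rintro P Q φ ⟨hg, hr⟩ ψ hinv
    have hgeq : fusGraph ψ = opSub (fusGraph φ) := by
      ext ⟨h, g⟩
      have hop_mem : ((h, g) ∈ opSub (fusGraph φ)) ↔ (g, h) ∈ fusGraph φ := Iff.rfl
      rw [mem_fusGraph, hop_mem, mem_fusGraph]
      constructor
      · rintro ⟨v, h1, h2⟩
        replace h1 : ψ v = h := h1
        replace h2 : (v : S) = g := h2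
        obtain ⟨x, hx⟩ := v.2
        refine ⟨x, by rw [hx, h2], ?_⟩
        show (x : S) = h
        rw [← h1, hinv x v (by rw [hx])]
      · rintro ⟨u, h1, h2⟩
        replace h1 : φ u = g := h1
        replace h2 : (u : S) = h := h2
        refine ⟨⟨g, by rw [← h1]; exact ⟨u, rfl⟩⟩, ?_, rfl⟩
        show ψ ⟨g, _⟩ = h
        rw [hinv u ⟨g, _⟩ (by simp [← h1]), h2]
    constructor
    · rw [hgeq]; exact hop _ hg
    · rintro g ⟨v, rfl⟩
      obtain ⟨x, hx⟩ := v.2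
      rw [hinv x v (by rw [hx])]
      exact x.2

end Construct

section Part1
variable {S : Type*} [Group S]

lemma subtype_mem {𝒻 : FusionSystem S} {P Q : Subgroup S} (h : P ≤ Q) :
    P.subtype ∈ 𝒻.Hom P Q := by
  apply 𝒻.conj_mem _ _ 1
  · intro p; simp
  · rw [Subgroup.range_subtype]; exact h

lemma sof_td (𝒻 : FusionSystem S) : ∀ L ∈ SOf 𝒻, IsTwistedDiagonal L := by
  rintro L ⟨P, φ, hφ, rfl⟩
  constructor
  · intro g hg
    rw [mem_fusGraph] at hg
    obtain ⟨u, h1, h2⟩ := hg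
    replace h2 : (u : S) = 1 := h2
    have : u = 1 := Subtype.ext (by simpa using h2)
    rw [this] at h1
    simpa using h1.symm
  · intro h hh
    rw [mem_fusGraph] at hh
    obtain ⟨u, h1, h2⟩ := hh
    replace h1 : φ u = 1 := h1
    replace h2 : (u : S) = h := h2
    have : u = 1 := 𝒻.injective hφ (by simpa using h1)
    rw [this] at h2
    simpa using h2.symm

lemma sof_delta (𝒻 : FusionSystem S) : deltaS S ∈ SOf 𝒻 := by
  refine ⟨⊤, (⊤ : Subgroup S).subtype, subtype_mem le_top, ?_⟩
  ext ⟨g, h⟩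
  constructor
  · rintro ⟨u, hu⟩
    exact ⟨⟨u, trivial⟩, hu⟩
  · rintro ⟨u, hu⟩
    exact ⟨(u : S), hu⟩

lemma sof_sub (𝒻 : FusionSystem S) :
    ∀ L ∈ SOf 𝒻, ∀ M : Subgroup (S × S), M ≤ L → M ∈ SOf 𝒻 := by
  rintro L ⟨P, φ, hφ, rfl⟩ M hM
  set P₀ : Subgroup S := Subgroup.map (MonoidHom.snd S S) M with hP₀
  have hle : P₀ ≤ P := by
    rintro u ⟨⟨g, u'⟩, hgu, rfl⟩
    obtain ⟨w, -, h2⟩ := mem_fusGraph.mp (hM hgu)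
    replace h2 : (w : S) = u' := h2
    show u' ∈ P
    exact h2 ▸ w.2
  set φ₀ : ↥P₀ →* S := φ.comp (Subgroup.inclusion hle) with hφ₀
  have hmem : φ₀ ∈ 𝒻.Hom P₀ ⊤ := by
    refine 𝒻.comp_mem φ₀ (subtype_mem hle) hφ ?_
    intro x y hy
    have : Subgroup.inclusion hle x = y := Subtype.ext hy.symm
    rw [hφ₀]; simp [← this]
  refine ⟨P₀, φ₀, hmem, ?_⟩
  ext ⟨g, u⟩
  rw [mem_fusGraph]
  constructor
  · intro hgu
    have hu : u ∈ P₀ := ⟨(g, u), hgu, rfl⟩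
    obtain ⟨w, h1, h2⟩ := mem_fusGraph.mp (hM hgu)
    refine ⟨⟨u, hu⟩, ?_, rfl⟩
    have hw : Subgroup.inclusion hle ⟨u, hu⟩ = w := Subtype.ext h2.symm
    show φ (Subgroup.inclusion hle ⟨u, hu⟩) = g
    rw [hw]; exact h1
  · rintro ⟨v, h1, h2⟩
    replace h1 : φ₀ v = g := h1
    replace h2 : (v : S) = u := h2
    obtain ⟨⟨g', u'⟩, hgu', hu'⟩ := v.2
    replace hu' : u' = (v : S) := hu'
    obtain ⟨w, hw1, hw2⟩ := mem_fusGraph.mp (hM hgu')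
    replace hw1 : φ w = g' := hw1
    replace hw2 : (w : S) = u' := hw2
    have hw : Subgroup.inclusion hle v = w :=
      Subtype.ext (by rw [Subgroup.coe_inclusion, hw2, hu'])
    have hgg : g = g' := by
      rw [← h1, ← hw1]
      show φ (Subgroup.inclusion hle v) = φ w
      rw [hw]
    rw [hgg, ← h2, ← hu']
    exact hgu'

lemma sof_op (𝒻 : FusionSystem S) : ∀ L ∈ SOf 𝒻, opSub L ∈ SOf 𝒻 := by
  rintro L ⟨P, φ, hφ, rfl⟩
  have hinj := 𝒻.injective hφ
  set e : ↥P ≃* ↥φ.range := MonoidHom.ofInjective hinj with he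
  set ψ : ↥φ.range →* S := P.subtype.comp e.symm.toMonoidHom with hψ
  have hcomm : ∀ (x : ↥P) (y : ↥φ.range), (y : S) = φ x → ψ y = x := by
    intro x y hy
    have : y = e x := Subtype.ext (by rw [hy, he, MonoidHom.ofInjective_apply])
    rw [hψ, this]; simp
  have hmem : ψ ∈ 𝒻.Hom φ.range ⊤ := hom_mono (𝒻.inv_mem hφ ψ hcomm) le_top
  refine ⟨φ.range, ψ, hmem, ?_⟩
  ext ⟨h, g⟩
  have : ((h, g) ∈ opSub (fusGraph φ)) ↔ (g, h) ∈ fusGraph φ := Iff.rfl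
  rw [this, mem_fusGraph, mem_fusGraph]
  constructor
  · rintro ⟨u, h1, h2⟩
    replace h1 : φ u = g := h1
    replace h2 : (u : S) = h := h2
    refine ⟨⟨g, ⟨u, h1⟩⟩, ?_, rfl⟩
    show ψ ⟨g, _⟩ = h
    rw [hcomm u ⟨g, ⟨u, h1⟩⟩ h1.symm, h2]
  · rintro ⟨v, h1, h2⟩
    replace h1 : ψ v = h := h1
    replace h2 : (v : S) = g := h2
    obtain ⟨x, hx⟩ := v.2
    exact ⟨x, by rw [hx, h2], by rw [← h1, hcomm x v hx.symm]⟩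

lemma sof_star (𝒻 : FusionSystem S) :
    ∀ L ∈ SOf 𝒻, ∀ M ∈ SOf 𝒻, starSub L M ∈ SOf 𝒻 := by
  rintro L ⟨P, φ, hφ, rfl⟩ M ⟨Q, ψ, hψ, rfl⟩
  set R : Subgroup S := Subgroup.map Q.subtype (Subgroup.comap ψ P) with hR
  have hRQ : R ≤ Q := by
    rintro u ⟨v, -, rfl⟩; exact v.2
  have hup : ∀ u : ↥R, ψ (Subgroup.inclusion hRQ u) ∈ P := by
    intro u
    obtain ⟨v, hv, huv⟩ := u.2
    have h : Subgroup.inclusion hRQ u = v :=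
      Subtype.ext (by rw [Subgroup.coe_inclusion]; exact huv.symm)
    rw [h]; exact hv
  set ψ₁ : ↥R →* S := ψ.comp (Subgroup.inclusion hRQ) with hψ₁
  have hψ₁mem : ψ₁ ∈ 𝒻.Hom R P := by
    have h0 : ψ₁ ∈ 𝒻.Hom R ⊤ := by
      refine 𝒻.comp_mem ψ₁ (subtype_mem hRQ) hψ ?_
      intro x y hy
      have : Subgroup.inclusion hRQ x = y := Subtype.ext hy.symm
      rw [hψ₁]; simp [← this]
    refine hom_mono h0 ?_
    rintro g ⟨u, rfl⟩
    exact hup u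
  set χ : ↥R →* S := φ.comp (ψ₁.codRestrict P (fun u => hup u)) with hχ
  have hχmem : χ ∈ 𝒻.Hom R ⊤ := by
    refine 𝒻.comp_mem χ hψ₁mem hφ ?_
    intro x y hy
    have : ψ₁.codRestrict P (fun u => hup u) x = y := Subtype.ext hy.symm
    rw [hχ]; simp [← this]
  refine ⟨R, χ, hχmem, ?_⟩
  ext ⟨g, k⟩
  have hmemstar : ((g, k) ∈ starSub (fusGraph φ) (fusGraph ψ)) ↔
      ∃ h : S, (g, h) ∈ fusGraph φ ∧ (h, k) ∈ fusGraph ψ := Iff.rfl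
  rw [hmemstar, mem_fusGraph]
  constructor
  · rintro ⟨h, hL, hM⟩
    rw [mem_fusGraph] at hL hM
    obtain ⟨x, hx1, hx2⟩ := hL
    obtain ⟨y, hy1, hy2⟩ := hM
    replace hx1 : φ x = g := hx1
    replace hx2 : (x : S) = h := hx2
    replace hy1 : ψ y = h := hy1
    replace hy2 : (y : S) = k := hy2
    have hyP : ψ y ∈ P := by rw [hy1, ← hx2]; exact x.2
    have hkR : k ∈ R := ⟨y, hyP, hy2⟩
    refine ⟨⟨k, hkR⟩, ?_, rfl⟩
    have hincl : Subgroup.inclusion hRQ ⟨k, hkR⟩ = y := Subtype.ext hy2.symm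
    have h1 : ψ₁ ⟨k, hkR⟩ = h := by rw [hψ₁]; simp [hincl, hy1]
    show φ (ψ₁.codRestrict P (fun u => hup u) ⟨k, hkR⟩) = g
    have : ψ₁.codRestrict P (fun u => hup u) ⟨k, hkR⟩ = x :=
      Subtype.ext (by rw [← hx2] at h1; exact h1)
    rw [this, hx1]
  · rintro ⟨u, h1, h2⟩
    replace h1 : χ u = g := h1
    replace h2 : (u : S) = k := h2
    refine ⟨ψ₁ u, mem_fusGraph.mpr ⟨ψ₁.codRestrict P (fun u => hup u) u, by rw [← h1]; rfl, rfl⟩,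
      mem_fusGraph.mpr ⟨Subgroup.inclusion hRQ u, rfl, h2⟩⟩

end Part1

section Conj
variable {S : Type*} [Group S]

lemma sof_conj (𝒻 : FusionSystem S) :
    ∀ L ∈ SOf 𝒻, ∀ a : S × S, Subgroup.map (MulAut.conj a).toMonoidHom L ∈ SOf 𝒻 := by
  rintro L ⟨P, φ, hφ, rfl⟩ a
  set P' : Subgroup S := Subgroup.map (MulAut.conj a.2).toMonoidHom P with hP'
  set c : ↥P' →* S := ((MulAut.conj a.2⁻¹).toMonoidHom).comp P'.subtype with hc
  have hcval : ∀ v : ↥P', c v = a.2⁻¹ * v * a.2 := by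
    intro v; simp [hc, MulAut.conj_apply]
  have hcmem : ∀ v : ↥P', c v ∈ P := by
    intro v
    obtain ⟨u, hu, huv⟩ := v.2
    have h1 : (v : S) = a.2 * u * a.2⁻¹ := by
      rw [← huv, MulEquiv.coe_toMonoidHom, MulAut.conj_apply]
    have h2 : c v = u := by rw [hcval, h1]; group
    rw [h2]; exact hu
  have hcHom : c ∈ 𝒻.Hom P' P := by
    apply 𝒻.conj_mem _ _ a.2⁻¹
    · intro p; rw [hcval]; simp
    · rintro g ⟨v, rfl⟩; exact hcmem v
  set c' : ↥P' →* ↥P := c.codRestrict P hcmem with hc'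
  set χ₁ : ↥P' →* S := φ.comp c' with hχ₁
  have hχ₁mem : χ₁ ∈ 𝒻.Hom P' ⊤ := by
    refine 𝒻.comp_mem χ₁ hcHom hφ ?_
    intro x y hy
    have : c' x = y := Subtype.ext hy.symm
    rw [hχ₁]; simp [← this]
  set ψ : ↥P' →* S := ((MulAut.conj a.1).toMonoidHom).comp χ₁ with hψ
  have hcA : ((MulAut.conj a.1).toMonoidHom).comp (⊤ : Subgroup S).subtype ∈ 𝒻.Hom ⊤ ⊤ := by
    apply 𝒻.conj_mem _ _ a.1
    · intro p; simp [MulAut.conj_apply]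
    · exact le_top
  have hψmem : ψ ∈ 𝒻.Hom P' ⊤ := by
    refine 𝒻.comp_mem ψ hχ₁mem hcA ?_
    intro x y hy
    show (MulAut.conj a.1).toMonoidHom (χ₁ x)
        = (MulAut.conj a.1).toMonoidHom ((⊤ : Subgroup S).subtype y)
    rw [← hy]
    rfl
  refine ⟨P', ψ, hψmem, ?_⟩
  ext ⟨g, h⟩
  rw [Subgroup.mem_map, mem_fusGraph]
  constructor
  · rintro ⟨⟨g0, h0⟩, hz, hzeq⟩
    obtain ⟨u, hu1, hu2⟩ := mem_fusGraph.mp hz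
    replace hu1 : φ u = g0 := hu1
    replace hu2 : (u : S) = h0 := hu2
    rw [MulEquiv.coe_toMonoidHom, MulAut.conj_apply, Prod.ext_iff] at hzeq
    obtain ⟨hg, hh⟩ := hzeq
    replace hg : a.1 * g0 * a.1⁻¹ = g := hg
    replace hh : a.2 * h0 * a.2⁻¹ = h := hh
    have hvP' : h ∈ P' := ⟨(u : S), u.2, by
      rw [MulEquiv.coe_toMonoidHom, MulAut.conj_apply, hu2]; exact hh⟩
    refine ⟨⟨h, hvP'⟩, ?_, rfl⟩
    have hcv : c ⟨h, hvP'⟩ = (u : S) := by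
      rw [hcval]
      show a.2⁻¹ * h * a.2 = (u : S)
      rw [← hh, hu2]
      group
    have hc'v : c' ⟨h, hvP'⟩ = u := Subtype.ext hcv
    have hχv : χ₁ ⟨h, hvP'⟩ = g0 := by rw [hχ₁]; simp [hc'v, hu1]
    show (MulAut.conj a.1).toMonoidHom (χ₁ ⟨h, hvP'⟩) = g
    rw [hχv, MulEquiv.coe_toMonoidHom, MulAut.conj_apply, hg]
  · rintro ⟨v, h1, h2⟩
    replace h1 : ψ v = g := h1
    replace h2 : (v : S) = h := h2
    refine ⟨(φ (c' v), ((c' v : ↥P) : S)), mk_mem_fusGraph φ (c' v), ?_⟩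
    rw [MulEquiv.coe_toMonoidHom, MulAut.conj_apply, Prod.ext_iff]
    constructor
    · show a.1 * φ (c' v) * a.1⁻¹ = g
      rw [← h1, hψ]
      simp [MulAut.conj_apply, hχ₁]
    · show a.2 * ((c' v : ↥P) : S) * a.2⁻¹ = h
      have hcc : ((c' v : ↥P) : S) = c v := rfl
      rw [hcc, hcval, ← h2]
      group

lemma sofIsSys (𝒻 : FusionSystem S) : IsSys (SOf 𝒻) :=
  ⟨sof_td 𝒻, sof_conj 𝒻, sof_sub 𝒻, sof_star 𝒻, sof_op 𝒻, sof_delta 𝒻⟩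

end Conj

section Final
variable {S : Type*} [Group S]

lemma hom_iff (𝒻 : FusionSystem S) (P Q : Subgroup S) (φ : ↥P →* S) :
    φ ∈ 𝒻.Hom P Q ↔ (fusGraph φ ∈ SOf 𝒻 ∧ φ.range ≤ Q) := by
  constructor
  · intro h
    exact ⟨⟨P, φ, hom_mono h le_top, rfl⟩, 𝒻.range_le h⟩
  · rintro ⟨⟨P', ψ, hψ, hgeq⟩, hr⟩
    have hPP' : P ≤ P' := by
      intro u hu
      have hx := mk_mem_fusGraph φ ⟨u, hu⟩
      rw [hgeq] at hx
      obtain ⟨v, -, h2⟩ := mem_fusGraph.mp hx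
      replace h2 : (v : S) = u := h2
      exact h2 ▸ v.2
    have hmem : φ ∈ 𝒻.Hom P ⊤ := by
      refine 𝒻.comp_mem φ (subtype_mem hPP') hψ ?_
      intro x y hy
      have hx := mk_mem_fusGraph φ x
      rw [hgeq] at hx
      obtain ⟨v, h1, h2⟩ := mem_fusGraph.mp hx
      replace h1 : ψ v = φ x := h1
      replace h2 : (v : S) = (x : S) := h2
      have hvy : v = y := Subtype.ext (by rw [h2]; exact hy.symm)
      rw [← hvy, h1]
    exact hom_mono hmem hr

lemma sof_eq {𝒮 : Set (Subgroup (S × S))} (h𝒮 : IsSys 𝒮) (𝒻 : FusionSystem S)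
    (hch : ∀ (P Q : Subgroup S) (φ : ↥P →* S),
      φ ∈ 𝒻.Hom P Q ↔ (fusGraph φ ∈ 𝒮 ∧ φ.range ≤ Q)) : SOf 𝒻 = 𝒮 := by
  ext L
  constructor
  · rintro ⟨P, φ, hφ, rfl⟩
    exact ((hch P ⊤ φ).mp hφ).1
  · intro hL
    obtain ⟨P, φ, rfl⟩ := extract (h𝒮.1 L hL)
    exact ⟨P, φ, (hch P ⊤ φ).mpr ⟨hL, le_top⟩, rfl⟩

lemma order_iff (𝒻 𝒻' : FusionSystem S) :
    (∀ P Q : Subgroup S, 𝒻.Hom P Q ⊆ 𝒻'.Hom P Q) ↔ SOf 𝒻 ⊆ SOf 𝒻' := by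
  constructor
  · rintro h L ⟨P, φ, hφ, rfl⟩
    exact ⟨P, φ, h P ⊤ hφ, rfl⟩
  · intro h P Q φ hφ
    obtain ⟨hg, hr⟩ := (hom_iff 𝒻 P Q φ).mp hφ
    exact (hom_iff 𝒻' P Q φ).mpr ⟨h hg, hr⟩

end Final

/-- the assignments `𝒻 ↦ 𝒮(𝒻)` and `𝒮 ↦ 𝒻(𝒮)` (where
`Hom_{𝒻(𝒮)}(P,Q)` consists of the `φ` whose graph lies in `𝒮` and whose image
lies in `Q`) are mutually inverse isomorphisms of posets between the fusion
systems on a finite `p`-group `S` and the set `Sys(S)`. -/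
theorem stmt14 {p : ℕ} (hp : p.Prime) {S : Type*} [Group S] [Finite S]
    (hS : IsPGroup p S) :
    -- 𝒮(𝒻) belongs to Sys(S)
    (∀ 𝒻 : FusionSystem S, IsSys (SOf 𝒻)) ∧
    -- 𝒻(𝒮) is a fusion system, characterized by its morphism sets
    (∀ 𝒮 : Set (Subgroup (S × S)), IsSys 𝒮 →
      ∃ 𝒻 : FusionSystem S, ∀ (P Q : Subgroup S) (φ : ↥P →* S),
        φ ∈ 𝒻.Hom P Q ↔ (fusGraph φ ∈ 𝒮 ∧ φ.range ≤ Q)) ∧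
    -- 𝒮(𝒻(𝒮)) = 𝒮
    (∀ 𝒮 : Set (Subgroup (S × S)), IsSys 𝒮 → ∀ 𝒻 : FusionSystem S,
      (∀ (P Q : Subgroup S) (φ : ↥P →* S),
        φ ∈ 𝒻.Hom P Q ↔ (fusGraph φ ∈ 𝒮 ∧ φ.range ≤ Q)) →
      SOf 𝒻 = 𝒮) ∧
    -- 𝒻(𝒮(𝒻)) = 𝒻
    (∀ 𝒻 : FusionSystem S, ∀ (P Q : Subgroup S) (φ : ↥P →* S),
      φ ∈ 𝒻.Hom P Q ↔ (fusGraph φ ∈ SOf 𝒻 ∧ φ.range ≤ Q)) ∧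
    -- both maps are order-preserving (an isomorphism of posets)
    (∀ 𝒻 𝒻' : FusionSystem S,
      (∀ P Q : Subgroup S, 𝒻.Hom P Q ⊆ 𝒻'.Hom P Q) ↔ SOf 𝒻 ⊆ SOf 𝒻') := by
  exact ⟨fun 𝒻 => sofIsSys 𝒻, fun 𝒮 h => sysFus h,
    fun 𝒮 h𝒮 𝒻 hch => sof_eq h𝒮 𝒻 hch,
    fun 𝒻 => hom_iff 𝒻, fun 𝒻 𝒻' => order_iff 𝒻 𝒻'⟩
end

section
/- Let p be a prime, S a finite p-group and 𝒻 a fusion system on S. Define, for U, V ≤ S and an isomorphism α: V → U, the rational number φ(U,α,V) := |S| / (|C_S(U)| · |Hom_𝒻(U,S)|) if α is a morphism in 𝒻 (i.e. α ∈ Hom_𝒻(V,U)), and φ(U,α,V) := 0 otherwise. Then for all U, W ≤ S and every isomorphism γ: W → U one has Σ_{V ≤ S} (|C_S(V)|/|S|) · Σ_{(α,β)} φ(U,α,V) · φ(V,β,W) = φ(U,γ,W), where the inner sum runs over all pairs of isomorphisms α: V → U, β: W → V with α∘β = γ. (Equivalently, the element ω_𝒻 := Σ_{(U,α,V)} φ(U,α,V)·(U,α,V),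 which corresponds under the mark isomorphism to the characteristic idempotent of 𝒻, is an idempotent for the ghost-algebra product.) -/
open scoped Classical

namespace FusionAux

variable {S : Type*} [Group S]

def MemIso (𝒻 : FusionSystem S) (P Q : Subgroup S) (α : ↥P ≃* ↥Q) : Prop :=
  (Q.subtype.comp α.toMonoidHom) ∈ 𝒻.Hom P Q

lemma range_comp (P Q : Subgroup S) (α : ↥P ≃* ↥Q) :
    (Q.subtype.comp α.toMonoidHom).range = Q := by
  ext x
  simp only [MonoidHom.mem_range, MonoidHom.comp_apply, MulEquiv.coe_toMonoidHom,
    Subgroup.coe_subtype]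
  constructor
  · rintro ⟨y, rfl⟩; exact (α y).2
  · intro hx; exact ⟨α.symm ⟨x, hx⟩, by simp⟩

lemma inv_mem' (𝒻 : FusionSystem S) {P Q Q' : Subgroup S} {φ : ↥P →* S}
    (h : φ ∈ 𝒻.Hom P Q) (hr : φ.range = Q') (ψ : ↥Q' →* S)
    (hψ : ∀ (x : ↥P) (y : ↥Q'), (y : S) = φ x → ψ y = x) : ψ ∈ 𝒻.Hom Q' P := by
  subst hr; exact 𝒻.inv_mem h ψ hψ

lemma MemIso.symm {𝒻 : FusionSystem S} {P Q : Subgroup S} {α : ↥P ≃* ↥Q}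
    (h : MemIso 𝒻 P Q α) : MemIso 𝒻 Q P α.symm := by
  refine inv_mem' 𝒻 h (range_comp P Q α) _ ?_
  intro x y hy
  have hyx : y = α x := Subtype.ext (by simpa using hy)
  simp [hyx]

lemma MemIso.trans {𝒻 : FusionSystem S} {P Q R : Subgroup S} {α : ↥P ≃* ↥Q} {β : ↥Q ≃* ↥R}
    (hα : MemIso 𝒻 P Q α) (hβ : MemIso 𝒻 Q R β) : MemIso 𝒻 P R (α.trans β) := by
  refine 𝒻.comp_mem _ hα hβ ?_
  intro x y hy
  have hyx : y = α x := Subtype.ext (by simpa using hy)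
  simp [hyx]

lemma subtype_mem_top (𝒻 : FusionSystem S) (Q : Subgroup S) : Q.subtype ∈ 𝒻.Hom Q ⊤ :=
  𝒻.conj_mem Q ⊤ 1 Q.subtype (fun p => by simp) le_top

lemma MemIso.mem_top {𝒻 : FusionSystem S} {P Q : Subgroup S} {α : ↥P ≃* ↥Q}
    (h : MemIso 𝒻 P Q α) : Q.subtype.comp α.toMonoidHom ∈ 𝒻.Hom P ⊤ := by
  refine 𝒻.comp_mem _ h (subtype_mem_top 𝒻 Q) ?_
  intro x y hy
  simpa using hy.symm

lemma comp_mem_top {𝒻 : FusionSystem S} {P Q : Subgroup S} {α : ↥P ≃* ↥Q}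
    (hα : MemIso 𝒻 P Q α) {φ : ↥Q →* S} (hφ : φ ∈ 𝒻.Hom Q ⊤) :
    φ.comp α.toMonoidHom ∈ 𝒻.Hom P ⊤ := by
  refine 𝒻.comp_mem _ hα hφ ?_
  intro x y hy
  have hyx : y = α x := Subtype.ext (by simpa using hy)
  simp [hyx]

lemma card_hom_eq {𝒻 : FusionSystem S} {P Q : Subgroup S} {α : ↥P ≃* ↥Q}
    (hα : MemIso 𝒻 P Q α) : Nat.card (𝒻.Hom P ⊤) = Nat.card (𝒻.Hom Q ⊤) := by
  refine Nat.card_congr ?_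
  refine ⟨fun φ => ⟨φ.1.comp α.symm.toMonoidHom, comp_mem_top hα.symm φ.2⟩,
          fun φ => ⟨φ.1.comp α.toMonoidHom, comp_mem_top hα φ.2⟩, ?_, ?_⟩
  · intro φ; apply Subtype.ext; ext x; simp
  · intro φ; apply Subtype.ext; ext x; simp

lemma card_sigma_eq (𝒻 : FusionSystem S) (U : Subgroup S) :
    Nat.card (Σ V : Subgroup S, {α : ↥U ≃* ↥V // MemIso 𝒻 U V α}) =
      Nat.card (𝒻.Hom U ⊤) := by
  refine Nat.card_congr (Equiv.ofBijective
    (fun x => ⟨x.1.subtype.comp x.2.1.toMonoidHom, x.2.2.mem_top⟩) ⟨?_, ?_⟩)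
  · rintro ⟨V, α, hα⟩ ⟨V', α', hα'⟩ h
    have h1 : V.subtype.comp α.toMonoidHom = V'.subtype.comp α'.toMonoidHom :=
      congrArg Subtype.val h
    have hV : V = V' := by
      rw [← range_comp U V α, ← range_comp U V' α', h1]
    subst hV
    have hαα : α = α' := by
      ext x
      have h2 := DFunLike.congr_fun h1 x
      simpa using h2
    subst hαα
    rfl
  · rintro ⟨φ, hφ⟩
    have hinj : Function.Injective φ := 𝒻.injective hφ
    have key : φ.range.subtype.comp (MonoidHom.ofInjective hinj).toMonoidHom = φ := by
      ext x; simp [MonoidHom.ofInjective_apply]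
    refine ⟨⟨φ.range, MonoidHom.ofInjective hinj, ?_⟩, ?_⟩
    · show φ.range.subtype.comp (MonoidHom.ofInjective hinj).toMonoidHom ∈ 𝒻.Hom U φ.range
      rw [key]
      exact 𝒻.isoOnto_mem hφ
    · exact Subtype.ext key

lemma card_iso_symm (𝒻 : FusionSystem S) (P Q : Subgroup S) :
    Nat.card {α : ↥P ≃* ↥Q // MemIso 𝒻 P Q α} =
      Nat.card {α : ↥Q ≃* ↥P // MemIso 𝒻 Q P α} :=
  Nat.card_congr ⟨fun a => ⟨a.1.symm, a.2.symm⟩, fun a => ⟨a.1.symm, a.2.symm⟩,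
    fun a => Subtype.ext (by simp), fun a => Subtype.ext (by simp)⟩

lemma sum_ite_card {α : Type*} [Finite α] (P : α → Prop) (C : ℚ) :
    ∑ᶠ a, (if P a then C else 0) = (Nat.card {a // P a} : ℚ) * C := by
  haveI : Fintype α := Fintype.ofFinite _
  rw [finsum_eq_sum_of_fintype, Finset.sum_ite, Finset.sum_const, Finset.sum_const_zero,
    add_zero, nsmul_eq_mul, Nat.card_eq_fintype_card, Fintype.card_subtype]

end FusionAux

noncomputable def phiF {S : Type*} [Group S] (𝒻 : FusionSystem S)
    (U V : Subgroup S) (α : ↥V ≃* ↥U) : ℚ :=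
  if (U.subtype.comp α.toMonoidHom) ∈ 𝒻.Hom V U then
    (Nat.card S : ℚ) /
      ((Nat.card (Subgroup.centralizer (U : Set S)) : ℚ) * (Nat.card (𝒻.Hom U ⊤) : ℚ))
  else 0

set_option maxHeartbeats 1000000 in
open FusionAux in
/-- for every fusion system `𝒻` on a finite `p`-group `S`, the
element `ω_𝒻 = Σ φ(U,α,V)·(U,α,V)` is idempotent for the ghost-algebra product
`(U,α,V)·(V,β,W) = (|C_S(V)|/|S|)·(U,α∘β,W)`: for all `U, W ≤ S` and every
isomorphism `γ : W → U`,
`Σ_V (|C_S(V)|/|S|) Σ_{α∘β=γ} φ(U,α,V)·φ(V,β,W) = φ(U,γ,W)`. -/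
theorem stmt18 {p : ℕ} (hp : p.Prime) {S : Type*} [Group S] [Finite S]
    (hS : IsPGroup p S) (𝒻 : FusionSystem S) (U W : Subgroup S) (γ : ↥W ≃* ↥U) :
    ∑ᶠ V : Subgroup S,
      ((Nat.card (Subgroup.centralizer (V : Set S)) : ℚ) / (Nat.card S : ℚ)) *
        ∑ᶠ (α : ↥V ≃* ↥U), ∑ᶠ (β : ↥W ≃* ↥V),
          (if β.trans α = γ then phiF 𝒻 U V α * phiF 𝒻 V W β else 0)
    = phiF 𝒻 U W γ := by
  classical
  haveI : Finite (Subgroup S) := Finite.of_injective _ SetLike.coe_injective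
  haveI : Fintype (Subgroup S) := Fintype.ofFinite _
  have phiF_eq : ∀ (P Q : Subgroup S) (α : ↥Q ≃* ↥P), phiF 𝒻 P Q α =
      if MemIso 𝒻 Q P α then (Nat.card S : ℚ) /
        ((Nat.card (Subgroup.centralizer (P : Set S)) : ℚ) * (Nat.card (𝒻.Hom P ⊤) : ℚ))
      else 0 := fun _ _ _ => rfl
  have hS0 : (Nat.card S : ℚ) ≠ 0 := by exact_mod_cast (Nat.card_pos (α := S)).ne'
  have hC0 : ∀ P : Subgroup S, (Nat.card (Subgroup.centralizer (P : Set S)) : ℚ) ≠ 0 :=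
    fun P => by exact_mod_cast (Nat.card_pos (α := ↥(Subgroup.centralizer (P : Set S)))).ne'
  have hFin : ∀ P : Subgroup S, Finite ↥(𝒻.Hom P ⊤) := fun P => by
    haveI : Finite (↥P →* S) := Finite.of_injective _ DFunLike.coe_injective
    infer_instance
  have hH0 : ∀ P : Subgroup S, (Nat.card (𝒻.Hom P ⊤) : ℚ) ≠ 0 := fun P => by
    haveI := hFin P
    haveI : Nonempty ↥(𝒻.Hom P ⊤) := ⟨⟨P.subtype, subtype_mem_top 𝒻 P⟩⟩
    exact_mod_cast (Nat.card_pos (α := ↥(𝒻.Hom P ⊤))).ne'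
  set cU : ℚ := (Nat.card S : ℚ) /
      ((Nat.card (Subgroup.centralizer (U : Set S)) : ℚ) * (Nat.card (𝒻.Hom U ⊤) : ℚ))
    with hcU
  set n : Subgroup S → ℕ := fun V => Nat.card {α : ↥V ≃* ↥U // MemIso 𝒻 V U α} with hn
  have step1 : ∀ V : Subgroup S,
      (∑ᶠ (α : ↥V ≃* ↥U), ∑ᶠ (β : ↥W ≃* ↥V),
        (if β.trans α = γ then phiF 𝒻 U V α * phiF 𝒻 V W β else 0))
      = (n V : ℚ) * (if MemIso 𝒻 W U γ then cU * ((Nat.card S : ℚ) /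
          ((Nat.card (Subgroup.centralizer (V : Set S)) : ℚ) * (Nat.card (𝒻.Hom V ⊤) : ℚ)))
        else 0) := by
    intro V
    have hβsum : ∀ α : ↥V ≃* ↥U,
        (∑ᶠ (β : ↥W ≃* ↥V), if β.trans α = γ then phiF 𝒻 U V α * phiF 𝒻 V W β else 0)
        = phiF 𝒻 U V α * phiF 𝒻 V W (γ.trans α.symm) := by
      intro α
      have hcond : (γ.trans α.symm).trans α = γ := by ext x; simp
      rw [finsum_eq_single _ (γ.trans α.symm) ?_, if_pos hcond]
      intro β hβ
      rw [if_neg]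
      intro hc
      exact hβ (by rw [← hc]; ext x; simp)
    have hval : ∀ α : ↥V ≃* ↥U, phiF 𝒻 U V α * phiF 𝒻 V W (γ.trans α.symm)
        = if MemIso 𝒻 V U α then (if MemIso 𝒻 W U γ then cU * ((Nat.card S : ℚ) /
            ((Nat.card (Subgroup.centralizer (V : Set S)) : ℚ) * (Nat.card (𝒻.Hom V ⊤) : ℚ)))
          else 0) else 0 := by
      intro α
      by_cases hα : MemIso 𝒻 V U α
      · by_cases hγ : MemIso 𝒻 W U γ
        · have hβm : MemIso 𝒻 W V (γ.trans α.symm) := hγ.trans hα.symm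
          rw [phiF_eq U V α, phiF_eq V W (γ.trans α.symm), if_pos hα, if_pos hβm,
            if_pos hα, if_pos hγ, hcU]
        · have hβm : ¬ MemIso 𝒻 W V (γ.trans α.symm) := by
            intro hβ
            apply hγ
            have h2 := hβ.trans hα
            rwa [show (γ.trans α.symm).trans α = γ from by ext x; simp] at h2
          rw [phiF_eq V W (γ.trans α.symm), if_neg hβm, mul_zero, if_pos hα, if_neg hγ]
      · rw [phiF_eq U V α, if_neg hα, zero_mul, if_neg hα]
    calc (∑ᶠ (α : ↥V ≃* ↥U), ∑ᶠ (β : ↥W ≃* ↥V),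
            (if β.trans α = γ then phiF 𝒻 U V α * phiF 𝒻 V W β else 0))
        = ∑ᶠ (α : ↥V ≃* ↥U), (if MemIso 𝒻 V U α then (if MemIso 𝒻 W U γ then cU *
            ((Nat.card S : ℚ) / ((Nat.card (Subgroup.centralizer (V : Set S)) : ℚ) *
              (Nat.card (𝒻.Hom V ⊤) : ℚ))) else 0) else 0) := by
          exact finsum_congr fun α => by rw [hβsum α, hval α]
      _ = (n V : ℚ) * _ := sum_ite_card _ _
  rw [finsum_eq_sum_of_fintype]
  by_cases hγ : MemIso 𝒻 W U γ
  · have hsum : ∀ V ∈ (Finset.univ : Finset (Subgroup S)),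
        ((Nat.card (Subgroup.centralizer (V : Set S)) : ℚ) / (Nat.card S : ℚ)) *
          (∑ᶠ (α : ↥V ≃* ↥U), ∑ᶠ (β : ↥W ≃* ↥V),
            (if β.trans α = γ then phiF 𝒻 U V α * phiF 𝒻 V W β else 0))
        = (n V : ℚ) * (cU / (Nat.card (𝒻.Hom U ⊤) : ℚ)) := by
      intro V _
      rw [step1 V, if_pos hγ]
      rcases Nat.eq_zero_or_pos (n V) with h0 | hpos
      · rw [h0]; simp
      · obtain ⟨⟨α, hα⟩, -⟩ := Nat.card_pos_iff.mp hpos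
        have hcard : Nat.card (𝒻.Hom V ⊤) = Nat.card (𝒻.Hom U ⊤) := card_hom_eq hα
        rw [hcard]
        have h1 : ((Nat.card (Subgroup.centralizer (V : Set S)) : ℚ) / (Nat.card S : ℚ)) *
            ((Nat.card S : ℚ) / ((Nat.card (Subgroup.centralizer (V : Set S)) : ℚ) *
              (Nat.card (𝒻.Hom U ⊤) : ℚ))) = 1 / (Nat.card (𝒻.Hom U ⊤) : ℚ) := by
          rw [div_mul_div_comm, div_eq_div_iff (mul_ne_zero hS0 (mul_ne_zero (hC0 V) (hH0 U))) (hH0 U)]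
          ring
        calc ((Nat.card (Subgroup.centralizer (V : Set S)) : ℚ) / (Nat.card S : ℚ)) *
              ((n V : ℚ) * (cU * ((Nat.card S : ℚ) /
                ((Nat.card (Subgroup.centralizer (V : Set S)) : ℚ) * (Nat.card (𝒻.Hom U ⊤) : ℚ)))))
            = (n V : ℚ) * cU * (((Nat.card (Subgroup.centralizer (V : Set S)) : ℚ) / (Nat.card S : ℚ)) *
              ((Nat.card S : ℚ) / ((Nat.card (Subgroup.centralizer (V : Set S)) : ℚ) *
                (Nat.card (𝒻.Hom U ⊤) : ℚ)))) := by ring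
          _ = (n V : ℚ) * (cU / (Nat.card (𝒻.Hom U ⊤) : ℚ)) := by rw [h1]; ring
    rw [Finset.sum_congr rfl hsum, ← Finset.sum_mul, phiF_eq U W γ, if_pos hγ, ← hcU]
    have hnsum : ∑ V : Subgroup S, (n V : ℚ) = (Nat.card (𝒻.Hom U ⊤) : ℚ) := by
      rw [← Nat.cast_sum]
      congr 1
      haveI : ∀ V : Subgroup S, Fintype {α : ↥U ≃* ↥V // MemIso 𝒻 U V α} :=
        fun V => Fintype.ofFinite _
      rw [← card_sigma_eq 𝒻 U, Nat.card_eq_fintype_card, Fintype.card_sigma]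
      refine Finset.sum_congr rfl fun V _ => ?_
      rw [show n V = Nat.card {α : ↥U ≃* ↥V // MemIso 𝒻 U V α} from card_iso_symm 𝒻 V U,
        Nat.card_eq_fintype_card]
    rw [hnsum, mul_comm, div_mul_cancel₀ _ (hH0 U)]
  · rw [phiF_eq U W γ, if_neg hγ]
    apply Finset.sum_eq_zero
    intro V _
    rw [step1 V, if_neg hγ, mul_zero, mul_zero]
end

section
/- Let p be a prime, S a finite p-group, and let Φ be a ℚ-valued function on the set of twisted diagonal subgroups of S×S that is constant on S×S-conjugacy classes. Set Fix(Φ) := {L twisted diagonal in S×S : Φ(L) ≠ 0}. Assume: (i) Δ(S) ∈ Fix(Φ); (ii) Fix(Φ) is closed under taking subgroups; (iii) for all P ≤ S and all injective homomorphisms φ, ψ: P → S one has Φ(Δ(φ(P),φ,P)) · Φ(Δ(ψ(P),ψ,P)) = Φ(Δ(φ(P), φ∘ψ⁻¹, ψ(P))) · Φ(Δ(ψ(P),ψ,P)) (the mark criterion for Φ to come from a right Frobenius element). Then Fix(Φ) belongs to Sys(S); that is, Fix(Φ) is in addition closed under the operations L ↦ L° and (L,M) ↦ L*M. -/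
section Aux
variable {S : Type*} [Group S]

lemma twisted_uniq_fst {L : Subgroup (S × S)} (hL : IsTwistedDiagonal L)
    {g g' h : S} (h1 : (g, h) ∈ L) (h2 : (g', h) ∈ L) : g = g' := by
  have hm : ((g, h) * (g', h)⁻¹ : S × S) ∈ L := mul_mem h1 (inv_mem h2)
  have h0 : (g * g'⁻¹, (1 : S)) ∈ L := by simpa [Prod.ext_iff] using hm
  exact mul_inv_eq_one.mp (hL.1 _ h0)

lemma twisted_uniq_snd {L : Subgroup (S × S)} (hL : IsTwistedDiagonal L)
    {g h h' : S} (h1 : (g, h) ∈ L) (h2 : (g, h') ∈ L) : h = h' := by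
  have hm : ((g, h) * (g, h')⁻¹ : S × S) ∈ L := mul_mem h1 (inv_mem h2)
  have h0 : ((1 : S), h * h'⁻¹) ∈ L := by simpa [Prod.ext_iff] using hm
  exact mul_inv_eq_one.mp (hL.2 _ h0)

/-- second projection restricted to `L`. -/
def sndL (L : Subgroup (S × S)) : ↥L →* S := (MonoidHom.snd S S).comp L.subtype

lemma sndL_apply (L : Subgroup (S × S)) (a : ↥L) : sndL L a = (a : S × S).2 := rfl

lemma sndL_inj {L : Subgroup (S × S)} (hL : IsTwistedDiagonal L) :
    Function.Injective (sndL L) := by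
  rw [injective_iff_map_eq_one]
  intro a ha
  rw [sndL_apply] at ha
  have hmem : ((a : S × S).1, (1 : S)) ∈ L :=
    (show ((a : S × S).1, (1:S)) = (a : S × S) by ext <;> simp [ha]) ▸ a.2
  have h1 := hL.1 _ hmem
  ext
  · exact h1
  · exact ha

noncomputable def phiL (L : Subgroup (S × S)) (hL : IsTwistedDiagonal L) :
    ↥(sndL L).range →* S :=
  ((MonoidHom.fst S S).comp L.subtype).comp
    (MonoidHom.ofInjective (sndL_inj hL)).symm.toMonoidHom

lemma phiL_mem {L : Subgroup (S × S)} (hL : IsTwistedDiagonal L)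
    (y : ↥(sndL L).range) : (phiL L hL y, (y : S)) ∈ L := by
  set a := (MonoidHom.ofInjective (sndL_inj hL)).symm y with ha
  have h2 : sndL L a = (y : S) := by
    conv_rhs => rw [← (MonoidHom.ofInjective (sndL_inj hL)).apply_symm_apply y]
    exact (MonoidHom.ofInjective_apply (sndL_inj hL)).symm
  have h3 : phiL L hL y = (a : S × S).1 := rfl
  rw [h3, ← h2, sndL_apply]
  exact a.2

lemma phiL_inj {L : Subgroup (S × S)} (hL : IsTwistedDiagonal L) :
    Function.Injective (phiL L hL) := by
  intro y y' h
  have h1 := phiL_mem hL y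
  have h2 := phiL_mem hL y'
  rw [h] at h1
  exact Subtype.ext (twisted_uniq_snd hL h2 h1).symm

lemma phiL_unique {L : Subgroup (S × S)} (hL : IsTwistedDiagonal L)
    {g : S} (y : ↥(sndL L).range) (hg : (g, (y : S)) ∈ L) : phiL L hL y = g :=
  twisted_uniq_fst hL (phiL_mem hL y) hg

lemma range_phiL_prod_subtype {L : Subgroup (S × S)} (hL : IsTwistedDiagonal L) :
    ((phiL L hL).prod (sndL L).range.subtype).range = L := by
  ext x
  constructor
  · rintro ⟨y, rfl⟩
    exact phiL_mem hL y
  · intro hx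
    have hy : x.2 ∈ (sndL L).range := ⟨⟨x, hx⟩, rfl⟩
    refine ⟨⟨x.2, hy⟩, ?_⟩
    have : (x.1, x.2) ∈ L := by simpa using hx
    have h1 : phiL L hL ⟨x.2, hy⟩ = x.1 := phiL_unique hL _ this
    simp [MonoidHom.prod_apply, h1]

lemma mem_opSub {L : Subgroup (S × S)} {x : S × S} : x ∈ opSub L ↔ (x.2, x.1) ∈ L :=
  Iff.rfl

lemma opSub_twisted {L : Subgroup (S × S)} (hL : IsTwistedDiagonal L) :
    IsTwistedDiagonal (opSub L) :=
  ⟨fun g hg => hL.2 g hg, fun h hh => hL.1 h hh⟩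

lemma range_subtype_prod_phiL {L : Subgroup (S × S)} (hL : IsTwistedDiagonal L) :
    ((sndL L).range.subtype.prod (phiL L hL)).range = opSub L := by
  ext x
  rw [mem_opSub]
  constructor
  · rintro ⟨y, rfl⟩
    exact phiL_mem hL y
  · intro hx
    have hy : x.1 ∈ (sndL L).range := ⟨⟨(x.2, x.1), hx⟩, rfl⟩
    refine ⟨⟨x.1, hy⟩, ?_⟩
    have h1 : phiL L hL ⟨x.1, hy⟩ = x.2 := phiL_unique hL _ hx
    simp [MonoidHom.prod_apply, h1]

lemma diag_le_deltaS (P : Subgroup S) :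
    (P.subtype.prod P.subtype).range ≤ deltaS S := by
  rintro x ⟨y, rfl⟩
  exact ⟨(y : S), rfl⟩

lemma deltaS_twisted : IsTwistedDiagonal (deltaS S) := by
  constructor
  · rintro g ⟨y, hy⟩
    have h1 := congrArg Prod.fst hy
    have h2 := congrArg Prod.snd hy
    simp_all
  · rintro h ⟨y, hy⟩
    have h1 := congrArg Prod.fst hy
    have h2 := congrArg Prod.snd hy
    simp_all

lemma sub_twisted {L M : Subgroup (S × S)} (hL : IsTwistedDiagonal L) (h : M ≤ L) :
    IsTwistedDiagonal M :=
  ⟨fun g hg => hL.1 g (h hg), fun g hg => hL.2 g (h hg)⟩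

lemma conj_twisted {L : Subgroup (S × S)} (hL : IsTwistedDiagonal L) (a : S × S) :
    IsTwistedDiagonal (Subgroup.map (MulAut.conj a).toMonoidHom L) := by
  constructor
  · intro g hg
    rw [Subgroup.mem_map_equiv, MulAut.conj_symm_apply] at hg
    have heq : (a⁻¹ * ((g, 1) : S × S) * a) = ((a.1⁻¹ * g * a.1, (1 : S)) : S × S) := by
      ext <;> simp [mul_assoc]
    rw [heq] at hg
    have h1 := hL.1 _ hg
    have h2 : g = a.1 * (a.1⁻¹ * g * a.1) * a.1⁻¹ := by group
    rw [h2, h1]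
    group
  · intro g hg
    rw [Subgroup.mem_map_equiv, MulAut.conj_symm_apply] at hg
    have heq : (a⁻¹ * (((1 : S), g) : S × S) * a) = (((1 : S), a.2⁻¹ * g * a.2) : S × S) := by
      ext <;> simp [mul_assoc]
    rw [heq] at hg
    have h1 := hL.2 _ hg
    have h2 : g = a.2 * (a.2⁻¹ * g * a.2) * a.2⁻¹ := by group
    rw [h2, h1]
    group

lemma star_twisted {L M : Subgroup (S × S)} (hL : IsTwistedDiagonal L)
    (hM : IsTwistedDiagonal M) : IsTwistedDiagonal (starSub L M) := by
  constructor
  · rintro g ⟨h, h1, h2⟩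
    have := hM.1 _ h2
    subst this
    exact hL.1 _ h1
  · rintro g ⟨h, h1, h2⟩
    have := hL.2 _ h1
    subst this
    exact hM.2 _ h2

end Aux


/-- if `Φ` is a conjugation-invariant `ℚ`-valued function on the
twisted diagonal subgroups of `S × S` with `Φ(Δ(S)) ≠ 0`, whose support
`Fix(Φ)` is closed under taking subgroups, and which satisfies the mark
criterion for right Frobenius elements, then `Fix(Φ) ∈ Sys(S)`. -/
theorem stmt19 {p : ℕ} (hp : p.Prime) {S : Type*} [Group S] [Finite S]
    (hS : IsPGroup p S) (Φ : Subgroup (S × S) → ℚ)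
    (hconst : ∀ (a : S × S) (L : Subgroup (S × S)), IsTwistedDiagonal L →
      Φ (Subgroup.map (MulAut.conj a).toMonoidHom L) = Φ L)
    (hΔ : Φ (deltaS S) ≠ 0)
    (hsub : ∀ L M : Subgroup (S × S), IsTwistedDiagonal L → Φ L ≠ 0 → M ≤ L → Φ M ≠ 0)
    (hfrob : ∀ (P : Subgroup S) (φ ψ : ↥P →* S),
      Function.Injective φ → Function.Injective ψ →
      Φ ((φ.prod P.subtype).range) * Φ ((ψ.prod P.subtype).range) =
        Φ ((φ.prod ψ).range) * Φ ((ψ.prod P.subtype).range)) :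
    IsSys {L | IsTwistedDiagonal L ∧ Φ L ≠ 0} := by
  refine ⟨fun L hL => hL.1, ?_, ?_, ?_, ?_, deltaS_twisted, hΔ⟩
  · -- conjugation
    rintro L ⟨hLt, hLn⟩ a
    exact ⟨conj_twisted hLt a, by rwa [hconst a L hLt]⟩
  · -- subgroups
    rintro L ⟨hLt, hLn⟩ M hML
    exact ⟨sub_twisted hLt hML, hsub L M hLt hLn hML⟩
  · -- star
    rintro L ⟨hLt, hLn⟩ M ⟨hMt, hMn⟩
    set N := starSub L M with hN
    have hNt : IsTwistedDiagonal N := star_twisted hLt hMt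
    refine ⟨hNt, ?_⟩
    have hle : (sndL N).range ≤ (sndL M).range := by
      rintro x ⟨n, rfl⟩
      obtain ⟨h, h1, h2⟩ := n.2
      exact ⟨⟨((h, (n : S × S).2) : S × S), h2⟩, rfl⟩
    set P := (sndL N).range with hP
    set φ := phiL N hNt with hφ
    set ψ := (phiL M hMt).comp (Subgroup.inclusion hle) with hψ
    have hψinj : Function.Injective ψ :=
      (phiL_inj hMt).comp (Subgroup.inclusion_injective hle)
    have hψmem : ∀ x : ↥P, (ψ x, (x : S)) ∈ M := by
      intro x
      have := phiL_mem hMt (Subgroup.inclusion hle x)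
      rwa [Subgroup.coe_inclusion] at this
    have hBle : (ψ.prod P.subtype).range ≤ M := by
      rintro y ⟨x, rfl⟩
      exact hψmem x
    have hCle : (φ.prod ψ).range ≤ L := by
      rintro y ⟨x, rfl⟩
      obtain ⟨h, h1, h2⟩ := phiL_mem hNt x
      have : h = ψ x := twisted_uniq_fst hMt h2 (hψmem x)
      subst this
      exact h1
    have key := hfrob P φ ψ (phiL_inj hNt) hψinj
    rw [range_phiL_prod_subtype hNt] at key
    have hψn : Φ ((ψ.prod P.subtype).range) ≠ 0 := hsub M _ hMt hMn hBle
    have hCn : Φ ((φ.prod ψ).range) ≠ 0 := hsub L _ hLt hLn hCle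
    have := mul_right_cancel₀ hψn key
    rw [this]
    exact hCn
  · -- op
    rintro L ⟨hLt, hLn⟩
    refine ⟨opSub_twisted hLt, ?_⟩
    set P := (sndL L).range with hP
    have key := hfrob P P.subtype (phiL L hLt)
      (Subgroup.subtype_injective P) (phiL_inj hLt)
    rw [range_phiL_prod_subtype hLt, range_subtype_prod_phiL hLt] at key
    have hΔP : Φ ((P.subtype.prod P.subtype).range) ≠ 0 :=
      hsub (deltaS S) _ deltaS_twisted hΔ (diag_le_deltaS P)
    have := mul_right_cancel₀ hLn key
    rw [← this]
    exact hΔP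
end
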